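/- arXiv:1903.07314 — 9 statements merged into one kernel-verified Lean document; each statement's English description precedes it below -/
import Mathlib

section
/- Let k be a positive integer, f(x) = Σ_{i=0}^{k-1} a_i x^i ∈ ℤ[x], and let N denote the absolute norm of the cyclotomic field ℚ(ζ_k) over ℚ. Then |N(f(ζ_k))| ≤ ( (k/φ(k)) · Σ_{i=0}^{k-1} a_i^2 )^{φ(k)/2}, where φ is Euler's totient function. -/
open Finset ComplexConjugate

/-!
By AM-GM, `|N(f(ζ))| ^ (2 / φ(k))` is at most the mean of `|f(ζ^h)|²` over the `φ(k)` residues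
`h` prime to `k`. Enlarging that sum to all residues mod `k` and using Parseval's identity
`∑_{h < k} |f(ζ^h)|² = k ∑_i a_i²` (orthogonality of the characters `h ↦ ζ^(ih)`) gives the bound.
-/

theorem IsPrimitiveRoot.sum_range_pow_mul_inv_pow {K : Type*} [Field K] {ζ : K} {k : ℕ}
    (hζ : IsPrimitiveRoot ζ k) {i j : ℕ} (hi : i < k) (hj : j < k) :
    ∑ h ∈ range k, (ζ ^ i * (ζ ^ j)⁻¹) ^ h = if i = j then (k : K) else 0 := by
  split_ifs with hij
  · simp [hij, pow_ne_zero _ (hζ.ne_zero (by omega))]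
  · have hne : ζ ^ i * (ζ ^ j)⁻¹ ≠ 1 := by
      rw [Ne, mul_inv_eq_one₀ (pow_ne_zero _ (hζ.ne_zero (by omega)))]
      exact fun h => hij (hζ.pow_inj hi hj h)
    rw [geom_sum_eq hne, mul_pow, inv_pow, ← pow_mul, ← pow_mul, mul_comm i, mul_comm j,
      pow_mul, pow_mul, hζ.pow_eq_one, one_pow, one_pow, inv_one, mul_one, sub_self, zero_div]

theorem IsPrimitiveRoot.sum_norm_sq_sum_mul_pow {ζ : ℂ} {k : ℕ} (hζ : IsPrimitiveRoot ζ k)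
    (c : ℕ → ℂ) :
    ∑ h ∈ range k, ‖∑ i ∈ range k, c i * (ζ ^ h) ^ i‖ ^ 2 = k * ∑ i ∈ range k, ‖c i‖ ^ 2 := by
  rcases k.eq_zero_or_pos with rfl | hk
  · simp
  have hconj : conj ζ = ζ⁻¹ :=
    (Complex.inv_eq_conj (Complex.norm_eq_one_of_pow_eq_one hζ.pow_eq_one hk.ne')).symm
  apply Complex.ofReal_injective
  push_cast
  simp_rw [← Complex.mul_conj', map_sum, map_mul, map_pow, hconj, sum_mul_sum]
  calc _ = ∑ i ∈ range k, ∑ j ∈ range k,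
        c i * conj (c j) * ∑ h ∈ range k, (ζ ^ i * (ζ ^ j)⁻¹) ^ h := by
        rw [sum_comm]
        refine sum_congr rfl fun i _ => ?_
        rw [sum_comm]
        refine sum_congr rfl fun j _ => ?_
        rw [mul_sum]
        refine sum_congr rfl fun h _ => ?_
        rw [mul_pow, inv_pow, inv_pow, inv_pow, ← pow_mul, ← pow_mul, ← pow_mul, ← pow_mul,
          mul_comm h i, mul_comm h j]
        ring
    _ = k * ∑ i ∈ range k, c i * conj (c i) := by
        rw [mul_sum]
        refine sum_congr rfl fun i hi => ?_
        rw [sum_congr rfl fun j hj => by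
          rw [hζ.sum_range_pow_mul_inv_pow (mem_range.1 hi) (mem_range.1 hj), mul_ite, mul_zero]]
        rw [sum_ite_eq, if_pos hi]
        ring

theorem norm_prod_le_mean_norm_sq_rpow {ι R : Type*} [SeminormedCommRing R] [NormMulClass R]
    [NormOneClass R] (s : Finset ι) (f : ι → R) :
    ‖∏ i ∈ s, f i‖ ≤ ((∑ i ∈ s, ‖f i‖ ^ 2) / #s) ^ ((#s : ℝ) / 2) := by
  rcases s.eq_empty_or_nonempty with rfl | hs
  · simp
  have amgm := Real.geom_mean_le_arith_mean s (fun _ => 1) (fun i => ‖f i‖ ^ 2)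
    (fun _ _ => zero_le_one) (by simpa using hs) (fun _ _ => sq_nonneg _)
  simp only [Real.rpow_one, sum_const, nsmul_eq_mul, mul_one, one_mul] at amgm
  have hn : (#s : ℝ) ≠ 0 := by simpa using hs.ne_empty
  have hprod : 0 ≤ ∏ i ∈ s, ‖f i‖ ^ 2 := prod_nonneg fun _ _ => sq_nonneg _
  calc ‖∏ i ∈ s, f i‖ = ((∏ i ∈ s, ‖f i‖ ^ 2) ^ (#s : ℝ)⁻¹) ^ ((#s : ℝ) / 2) := by
        rw [← Real.rpow_mul hprod, inv_mul_eq_div, div_div_cancel_left' hn, prod_pow, norm_prod]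
        exact_mod_cast (Real.pow_rpow_inv_natCast (prod_nonneg fun _ _ => norm_nonneg _)
          two_ne_zero).symm
    _ ≤ _ := by gcongr

theorem norm_bound_general (k : ℕ) (a : ℕ → ℤ) (ζ : ℂ)
    (hζ : IsPrimitiveRoot ζ k) :
    ‖(∏ h ∈ (Finset.range k).filter (fun h => Nat.Coprime h k),
        ∑ i ∈ Finset.range k, (a i : ℂ) * (ζ ^ h) ^ i)‖
      ≤ (((k : ℝ) / (Nat.totient k)) * ∑ i ∈ Finset.range k, (a i : ℝ) ^ 2)
          ^ ((Nat.totient k : ℝ) / 2) := by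
  set f : ℕ → ℂ := fun h => ∑ i ∈ range k, (a i : ℂ) * (ζ ^ h) ^ i
  have hcard : #{h ∈ range k | h.Coprime k} = k.totient := by
    simp_rw [Nat.totient_eq_card_coprime, Nat.coprime_comm]
  calc ‖∏ h ∈ range k with h.Coprime k, f h‖
      ≤ ((∑ h ∈ range k with h.Coprime k, ‖f h‖ ^ 2) / k.totient) ^ ((k.totient : ℝ) / 2) :=
        hcard ▸ norm_prod_le_mean_norm_sq_rpow _ f
    _ ≤ ((∑ h ∈ range k, ‖f h‖ ^ 2) / k.totient) ^ ((k.totient : ℝ) / 2) := by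
        gcongr
        exact filter_subset _ _
    _ = _ := by
        rw [hζ.sum_norm_sq_sum_mul_pow]
        simp only [Complex.norm_intCast, sq_abs]
        rw [mul_div_right_comm]

theorem norm_bound (k : ℕ) (hk : 0 < k) (a : ℕ → ℤ) (ζ : ℂ)
    (hζ : IsPrimitiveRoot ζ k) :
    ‖(∏ h ∈ (Finset.range k).filter (fun h => Nat.Coprime h k),
        ∑ i ∈ Finset.range k, (a i : ℂ) * (ζ ^ h) ^ i)‖
      ≤ (((k : ℝ) / (Nat.totient k)) * ∑ i ∈ Finset.range k, (a i : ℝ) ^ 2)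
          ^ ((Nat.totient k : ℝ) / 2) :=
  norm_bound_general k a ζ hζ
end

section
/- Let k be a positive integer and f(x) = Σ_{i=0}^{k-1} a_i x^i ∈ ℤ[x] with Σ_{i=0}^{k-1} a_i^2 ≥ 3. Then the absolute norm of f(ζ_k) from ℚ(ζ_k) to ℚ satisfies |N(f(ζ_k))| ≤ (Σ_{i=0}^{k-1} a_i^2)^{k/2}. -/
/-!
Write `S = ∑ aᵢ²` and `φ` for the number of conjugates `f(ζ^h)`, `gcd(h, k) = 1`. Orthogonality of the
`k`-th roots of unity gives Parseval's identity `∑_{h<k} |f(ζ^h)|² = k S`, so by AM-GM the product of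
the `φ` values `|f(ζ^h)|²` over the conjugates is at most `(k S / φ)^φ`. Since `x ≤ e^(x-1)`, we have
`(k/φ)^φ ≤ e^(k-φ) ≤ 3^(k-φ) ≤ S^(k-φ)`, whence `|N(f(ζ))|² ≤ S^k`.
-/

open Finset ComplexConjugate

namespace IsPrimitiveRoot

variable {ζ : ℂ} {k : ℕ}

theorem sum_pow_mul_conj_pow_eq_ite (hζ : IsPrimitiveRoot ζ k) {i j : ℕ} (hi : i < k)
    (hj : j < k) :
    ∑ h ∈ range k, (ζ ^ i * conj ζ ^ j) ^ h = if i = j then (k : ℂ) else 0 := by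
  have hζ0 : ζ ≠ 0 := hζ.ne_zero (by omega)
  rw [← Complex.inv_eq_conj (hζ.norm'_eq_one (by omega)), inv_pow, ← div_eq_mul_inv]
  split_ifs with hij
  · simp [hij, hζ0]
  · have hne : ζ ^ i / ζ ^ j ≠ 1 := fun h =>
      hij (hζ.pow_inj hi hj ((div_eq_one_iff_eq (pow_ne_zero _ hζ0)).mp h))
    rw [geom_sum_eq hne, div_pow, ← pow_mul, ← pow_mul, mul_comm i, mul_comm j, pow_mul, pow_mul,
      hζ.pow_eq_one, one_pow, one_pow, div_one, sub_self, zero_div]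

theorem sum_norm_sq_sum_mul_pow_s2 (hζ : IsPrimitiveRoot ζ k) (c : ℕ → ℂ) :
    ∑ h ∈ range k, ‖∑ i ∈ range k, c i * (ζ ^ h) ^ i‖ ^ 2 = k * ∑ i ∈ range k, ‖c i‖ ^ 2 := by
  apply Complex.ofReal_injective
  push_cast
  simp_rw [← Complex.mul_conj']
  calc ∑ h ∈ range k, (∑ i ∈ range k, c i * (ζ ^ h) ^ i) * conj (∑ j ∈ range k, c j * (ζ ^ h) ^ j)
      = ∑ h ∈ range k, ∑ i ∈ range k, ∑ j ∈ range k,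
          c i * conj (c j) * (ζ ^ i * conj ζ ^ j) ^ h :=
        sum_congr rfl fun h _ => by
          rw [map_sum, sum_mul_sum]
          refine sum_congr rfl fun i _ => sum_congr rfl fun j _ => ?_
          simp only [map_mul, map_pow]
          ring
    _ = ∑ i ∈ range k, ∑ j ∈ range k,
          c i * conj (c j) * ∑ h ∈ range k, (ζ ^ i * conj ζ ^ j) ^ h := by
        simp_rw [mul_sum]
        rw [sum_comm]
        exact sum_congr rfl fun i _ => sum_comm
    _ = ∑ i ∈ range k, ∑ j ∈ range k, c i * conj (c j) * if i = j then (k : ℂ) else 0 :=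
        sum_congr rfl fun i hi => sum_congr rfl fun j hj => by
          rw [hζ.sum_pow_mul_conj_pow_eq_ite (mem_range.1 hi) (mem_range.1 hj)]
    _ = k * ∑ i ∈ range k, c i * conj (c i) := by
        simp only [mul_ite, mul_zero, sum_ite_eq, mul_sum]
        exact sum_congr rfl fun i hi => by rw [if_pos hi, mul_comm]

end IsPrimitiveRoot

theorem Real.div_pow_le_exp_sub {x : ℝ} (hx : 0 ≤ x) (n : ℕ) : (x / n) ^ n ≤ Real.exp (x - n) := by
  rcases eq_or_ne n 0 with rfl | hn
  · simpa using Real.one_le_exp hx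
  calc (x / n) ^ n ≤ Real.exp (x / n - 1) ^ n := by
        gcongr
        linarith [Real.add_one_le_exp (x / n - 1)]
    _ = Real.exp (x - n) := by
        rw [← Real.exp_nat_mul]
        field_simp

theorem pow_mul_div_le_pow_of_three_le {k n : ℕ} (hnk : n ≤ k) {S : ℝ} (hS : 3 ≤ S) :
    (k * S / n) ^ n ≤ S ^ k := by
  calc (k * S / n) ^ n = (k / n) ^ n * S ^ n := by rw [mul_div_right_comm, mul_pow]
    _ ≤ Real.exp 1 ^ (k - n) * S ^ n := by
        rw [Real.exp_one_pow, Nat.cast_sub hnk]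
        gcongr
        exact Real.div_pow_le_exp_sub k.cast_nonneg n
    _ ≤ S ^ (k - n) * S ^ n := by
        gcongr
        linarith [Real.exp_one_lt_three]
    _ = S ^ k := by rw [← pow_add, Nat.sub_add_cancel hnk]

theorem Real.prod_le_sum_div_card_pow {ι : Type*} (s : Finset ι) {z : ι → ℝ}
    (hz : ∀ i ∈ s, 0 ≤ z i) : ∏ i ∈ s, z i ≤ ((∑ i ∈ s, z i) / #s) ^ #s := by
  rcases s.eq_empty_or_nonempty with rfl | hs
  · simp
  have hamgm := Real.geom_mean_le_arith_mean s 1 z (fun _ _ => zero_le_one) (by simpa using hs) hz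
  simp only [Pi.one_apply, Real.rpow_one, sum_const, nsmul_eq_mul, mul_one, one_mul] at hamgm
  calc ∏ i ∈ s, z i = ((∏ i ∈ s, z i) ^ ((#s : ℝ)⁻¹)) ^ #s :=
        (Real.rpow_inv_natCast_pow (prod_nonneg hz) hs.card_pos.ne').symm
    _ ≤ ((∑ i ∈ s, z i) / #s) ^ #s :=
        pow_le_pow_left₀ (Real.rpow_nonneg (prod_nonneg hz) _) hamgm _

theorem norm_bound_ge_three_general (k : ℕ) (a : ℕ → ℤ)
    (ha : 3 ≤ ∑ i ∈ Finset.range k, (a i) ^ 2) (ζ : ℂ)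
    (hζ : IsPrimitiveRoot ζ k) :
    ‖(∏ h ∈ (Finset.range k).filter (fun h => Nat.Coprime h k),
        ∑ i ∈ Finset.range k, (a i : ℂ) * (ζ ^ h) ^ i)‖
      ≤ ((∑ i ∈ Finset.range k, (a i : ℝ) ^ 2)) ^ ((k : ℝ) / 2) := by
  set S : ℝ := ∑ i ∈ range k, (a i : ℝ) ^ 2
  set T := (range k).filter (fun h => Nat.Coprime h k)
  set F : ℕ → ℂ := fun h => ∑ i ∈ range k, (a i : ℂ) * (ζ ^ h) ^ i
  have hS : 3 ≤ S := by simpa [S] using (Int.cast_le (R := ℝ)).2 ha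
  have hsum : ∑ h ∈ T, ‖F h‖ ^ 2 ≤ k * S := calc
    ∑ h ∈ T, ‖F h‖ ^ 2 ≤ ∑ h ∈ range k, ‖F h‖ ^ 2 :=
      sum_le_sum_of_subset_of_nonneg (filter_subset _ _) fun _ _ _ => sq_nonneg _
    _ = k * S := by simpa [S] using hζ.sum_norm_sq_sum_mul_pow_s2 (fun i => a i)
  have hsq : ‖∏ h ∈ T, F h‖ ^ 2 ≤ S ^ k := calc
    ‖∏ h ∈ T, F h‖ ^ 2 = ∏ h ∈ T, ‖F h‖ ^ 2 := by rw [norm_prod, prod_pow]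
    _ ≤ ((∑ h ∈ T, ‖F h‖ ^ 2) / #T) ^ #T :=
      Real.prod_le_sum_div_card_pow T fun _ _ => sq_nonneg _
    _ ≤ (k * S / #T) ^ #T := by gcongr
    _ ≤ S ^ k := pow_mul_div_le_pow_of_three_le ((card_filter_le _ _).trans_eq (card_range k)) hS
  have hsqrt : S ^ ((k : ℝ) / 2) = √(S ^ k) := by
    rw [Real.sqrt_eq_rpow, ← Real.rpow_natCast, ← Real.rpow_mul (by linarith)]
    ring_nf
  rw [hsqrt]
  exact Real.le_sqrt_of_sq_le hsq

theorem norm_bound_ge_three (k : ℕ) (hk : 0 < k) (a : ℕ → ℤ)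
    (ha : 3 ≤ ∑ i ∈ Finset.range k, (a i) ^ 2) (ζ : ℂ)
    (hζ : IsPrimitiveRoot ζ k) :
    ‖(∏ h ∈ (Finset.range k).filter (fun h => Nat.Coprime h k),
        ∑ i ∈ Finset.range k, (a i : ℂ) * (ζ ^ h) ^ i)‖
      ≤ ((∑ i ∈ Finset.range k, (a i : ℝ) ^ 2)) ^ ((k : ℝ) / 2) :=
  norm_bound_ge_three_general k a ha ζ hζ
end

section
/- Let k be a prime and f(x) = Σ_{i=0}^{k-1} a_i x^i ∈ ℤ[x] with Σ_{i=0}^{k-1} a_i = 0. Let M be the k×k circulant matrix with first row (a_0,...,a_{k-1}) and let N be the (k-1)×(k-1) matrix obtained from M by deleting its first row and first column. Then the norm of f(ζ_k) from ℚ(ζ_k) to ℚ equals k · det(N). -/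
/-!
Let `M r s = v (s - r)` be the circulant matrix with first row `v` and `f w = ∑ i, v i * w ^ i`.
For `w ^ k = 1` the vector `(w ^ s)ₛ` is an eigenvector of `M` with eigenvalue `f w`, and
`f 1 = 0`. Add `1` to every entry of column `0` of `M` to get `B`. In the Vandermonde basis
`(ζ ^ (h * s))` this correction only adds a row of ones to `diagonal (f (ζ ^ h))`, giving an upper
triangular matrix with diagonal `1, f ζ, …, f (ζ ^ (k - 1))`; hence `det B = ∏_{h ≥ 1} f (ζ ^ h)`.
On the other hand the rows of `B` sum to `(k, 0, …, 0)`, so replacing its first row by that sum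
and expanding along it gives `det B = k * det N`, `N` being also the `(0, 0)`-minor of `B`.
-/

open Finset Matrix

theorem pow_finVal_add {M : Type*} [Monoid M] {k : ℕ} {w : M} (hw : w ^ k = 1) (a b : Fin k) :
    w ^ ((a + b : Fin k) : ℕ) = w ^ (a : ℕ) * w ^ (b : ℕ) := by
  rw [Fin.val_add, ← pow_eq_pow_mod _ hw, pow_add]

namespace Matrix

variable {R : Type*} [CommRing R]

theorem det_eq_mul_det_submatrix_succ_of_sum_rows {n : ℕ}
    (M : Matrix (Fin (n + 1)) (Fin (n + 1)) R) {c : R}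
    (h : ∀ j, ∑ i, M i j = (Pi.single 0 c : Fin (n + 1) → R) j) :
    M.det = c * (M.submatrix Fin.succ Fin.succ).det := by
  have hrows : ∑ i, M i = Pi.single 0 c := by
    ext j
    rw [← h j]
    exact Finset.sum_apply j _ _
  have hsum := M.det_updateRow_sum 0 1
  simp only [Pi.one_apply, one_smul, hrows] at hsum
  rw [← hsum, det_succ_row_zero, Fin.sum_univ_succ]
  have hminor : (M.updateRow 0 (Pi.single 0 c)).submatrix Fin.succ Fin.succ =
      M.submatrix Fin.succ Fin.succ := by
    ext i j
    simp
  simp [hminor]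

theorem det_diagonal_add_vecMulVec_single {n : ℕ} (d : Fin (n + 1) → R) :
    (diagonal d + vecMulVec (Pi.single 0 1) 1).det = (d 0 + 1) * ∏ i : Fin n, d i.succ := by
  rw [det_of_isUpperTriangular, Fin.prod_univ_succ]
  · simp [Fin.succ_ne_zero]
  · intro i j (hji : j < i)
    simp [diagonal_apply_ne _ hji.ne', Fin.ne_zero_of_lt hji]

theorem circulant_transpose_mulVec_pow {k : ℕ} [NeZero k] (v : Fin k → R) {w : R}
    (hw : w ^ k = 1) :
    (circulant v)ᵀ *ᵥ (fun s : Fin k => w ^ (s : ℕ)) =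
      (∑ i, v i * w ^ (i : ℕ)) • fun s : Fin k => w ^ (s : ℕ) := by
  ext r
  simp only [mulVec, dotProduct, transpose_apply, circulant_apply, Pi.smul_apply, smul_eq_mul,
    sum_mul]
  rw [← Equiv.sum_comp (Equiv.addRight r) _]
  refine sum_congr rfl fun t _ => ?_
  simp only [Equiv.coe_addRight, add_sub_cancel_right, pow_finVal_add hw]
  ring

theorem sum_rows_circulant_transpose_add_vecMulVec {n : ℕ} (v : Fin (n + 1) → R)
    (hv : ∑ i, v i = 0) (s : Fin (n + 1)) :
    ∑ r, ((circulant v)ᵀ + vecMulVec 1 (Pi.single 0 1) : Matrix (Fin (n + 1)) (Fin (n + 1)) R) r s =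
      (Pi.single 0 ((n + 1 : ℕ) : R) : Fin (n + 1) → R) s := by
  simp only [add_apply, transpose_apply, circulant_apply, vecMulVec_apply,
    Pi.one_apply, one_mul, sum_add_distrib, sum_const, card_univ, Fintype.card_fin, nsmul_eq_mul]
  rw [Fintype.sum_equiv (Equiv.subLeft s) (fun r => v (s - r)) v fun _ => rfl, hv, zero_add]
  by_cases hs : s = 0 <;> simp [hs]

theorem circulant_transpose_add_vecMulVec_mul_vandermonde {n : ℕ} (v : Fin (n + 1) → R) {ζ : R}
    (hζ : ζ ^ (n + 1) = 1) :
    ((circulant v)ᵀ + vecMulVec 1 (Pi.single 0 1)) *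
        (vandermonde fun h : Fin (n + 1) => ζ ^ (h : ℕ))ᵀ =
      (vandermonde fun h : Fin (n + 1) => ζ ^ (h : ℕ))ᵀ *
        (diagonal (fun h : Fin (n + 1) => ∑ i, v i * (ζ ^ (h : ℕ)) ^ (i : ℕ)) +
          vecMulVec (Pi.single 0 1) 1) := by
  ext r h
  have heig := congrFun (circulant_transpose_mulVec_pow v (w := ζ ^ (h : ℕ))
    (by rw [pow_right_comm, hζ, one_pow])) r
  simp only [mulVec, dotProduct, Pi.smul_apply, smul_eq_mul] at heig
  rw [add_mul, mul_add, add_apply, add_apply, mul_diagonal]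
  simp only [mul_apply, transpose_apply, vandermonde_apply, vecMulVec_apply] at heig ⊢
  rw [heig]
  simp [Pi.single_apply, mul_comm]

theorem det_circulant_transpose_add_vecMulVec [IsDomain R] {n : ℕ} (v : Fin (n + 1) → R)
    (hv : ∑ i, v i = 0) {ζ : R} (hζ : IsPrimitiveRoot ζ (n + 1)) :
    ((circulant v)ᵀ + vecMulVec 1 (Pi.single 0 1)).det =
      ∏ h : Fin n, ∑ i, v i * (ζ ^ ((h : ℕ) + 1)) ^ (i : ℕ) := by
  have hF : (vandermonde fun h : Fin (n + 1) => ζ ^ (h : ℕ))ᵀ.det ≠ 0 := by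
    rw [det_transpose, det_vandermonde_ne_zero_iff]
    exact fun i j hij => Fin.ext (hζ.pow_inj i.isLt j.isLt hij)
  have hdet := congrArg det (circulant_transpose_add_vecMulVec_mul_vandermonde v hζ.pow_eq_one)
  rw [det_mul, det_mul, mul_comm, det_diagonal_add_vecMulVec_single] at hdet
  rw [mul_left_cancel₀ hF hdet]
  simp [hv]

end Matrix

theorem norm_eq_k_mul_det (k : ℕ) (hk : k.Prime) (a : ℕ → ℤ)
    (hs : ∑ i ∈ Finset.range k, a i = 0) (ζ : ℂ) (hζ : IsPrimitiveRoot ζ k) :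
    ∏ h ∈ Finset.Ico 1 k, ∑ i ∈ Finset.range k, (a i : ℂ) * (ζ ^ h) ^ i
      = (k : ℂ) * (Matrix.of fun r s : Fin (k - 1) =>
            ((a ((((s : ℕ) + 1) + k - ((r : ℕ) + 1)) % k) : ℤ) : ℂ)).det := by
  obtain ⟨n, rfl⟩ : ∃ n, k = n + 1 := Nat.exists_eq_add_one.mpr hk.pos
  set v : Fin (n + 1) → ℂ := fun i => a i
  have hv : ∑ i, v i = 0 := by
    simpa [v, Fin.sum_univ_eq_sum_range (fun i => (a i : ℂ))] using congrArg ((↑) : ℤ → ℂ) hs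
  have hN : (Matrix.of fun r s : Fin (n + 1 - 1) =>
      ((a ((((s : ℕ) + 1) + (n + 1) - ((r : ℕ) + 1)) % (n + 1)) : ℤ) : ℂ)) =
      ((circulant v)ᵀ + vecMulVec 1 (Pi.single 0 1)).submatrix Fin.succ Fin.succ := by
    have hidx (r s : Fin n) : ((s.succ - r.succ : Fin (n + 1)) : ℕ) =
        ((s : ℕ) + 1 + (n + 1) - ((r : ℕ) + 1)) % (n + 1) := by
      rw [Fin.val_sub, Fin.val_succ, Fin.val_succ]
      congr 1
      omega
    ext r s
    simp [v, circulant_apply, hidx]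
  rw [hN, ← det_eq_mul_det_submatrix_succ_of_sum_rows _
    (sum_rows_circulant_transpose_add_vecMulVec v hv),
    det_circulant_transpose_add_vecMulVec v hv hζ, prod_Ico_eq_prod_range, ← Fin.prod_univ_eq_prod_range]
  refine prod_congr rfl fun h _ => ?_
  rw [add_comm 1,
    ← Fin.sum_univ_eq_sum_range (fun i => (a i : ℂ) * (ζ ^ ((h : ℕ) + 1)) ^ i)]
end

section
/- Let N = (a_{ij}) be an n×n matrix with real entries. For each row i, let N_i^+ = Σ_j max(0, a_{ij}) and N_i^- = Σ_j max(0, -a_{ij}). Then |det(N)| ≤ ∏_{i=0}^{n-1} max(N_i^+, N_i^-). -/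
/-!
The determinant is linear in each row. For a row `v` with positive mass `P = ∑ max 0 vⱼ`,
negative mass `Q = ∑ max 0 (-vⱼ)` and `M = max P Q`, put the weights `max 0 vⱼ` and `max 0 (-vⱼ)`
on `some j` and the slacks `M - P`, `M - Q` on `none`; with `e none = 0` and `e (some j)` the
`j`-th unit vector this gives `M • v = ∑ₛₜ aₛ bₜ • (eₛ - eₜ)` with nonnegative weights of total
mass `M²`. Hence `|det N| ≤ M · max |det N'|`, where `N'` ranges over the matrices obtained by
replacing that row by some `eₛ - eₜ`. Doing this for every row reduces the bound to matrices all of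
whose rows have the form `eₛ - eₜ`. Such a matrix has determinant in `{-1, 0, 1}`: if every row is
`eⱼ - eₖ` the rows sum to zero, and otherwise some row has at most one nonzero entry, which is `±1`,
and Laplace expansion along it leaves a minor of the same kind.
-/

open Finset Function Matrix

variable {ι κ R : Type*}

def optionSingle [DecidableEq ι] [Zero R] [One R] (s : Option ι) : ι → R :=
  fun x => if s = some x then 1 else 0

@[simp]
lemma optionSingle_none [DecidableEq ι] [Zero R] [One R] :
    (optionSingle none : ι → R) = 0 := by
  funext x
  simp [optionSingle]

lemma optionSingle_comp [DecidableEq ι] [DecidableEq κ] [Zero R] [One R] {f : κ → ι}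
    (hf : Injective f) (s : Option ι) :
    ∃ s' : Option κ, optionSingle s ∘ f = (optionSingle s' : κ → R) := by
  by_cases h : ∃ a, s = some (f a)
  · obtain ⟨a, rfl⟩ := h
    exact ⟨some a, funext fun x => by simp [optionSingle, hf.eq_iff]⟩
  · push Not at h
    exact ⟨none, funext fun x => by simp [optionSingle, h x]⟩

lemma sum_abs_optionSingle_le_one [DecidableEq ι] [Fintype ι] [Ring R] [LinearOrder R]
    [IsOrderedRing R] (s : Option ι) : ∑ x, |(optionSingle s x : R)| ≤ 1 := by
  cases s <;> simp [optionSingle, apply_ite]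

/-- The rows of the (transposed) incidence matrix of a directed graph, where `none` stands for a
missing endpoint, so that `0` and `±` unit vectors are included. -/
def IsArcRow [DecidableEq ι] [Ring R] (v : ι → R) : Prop :=
  ∃ s t : Option ι, v = optionSingle s - optionSingle t

lemma IsArcRow.comp [DecidableEq ι] [DecidableEq κ] [Ring R] {v : ι → R} (hv : IsArcRow v)
    {f : κ → ι} (hf : Injective f) : IsArcRow (v ∘ f) := by
  obtain ⟨s, t, rfl⟩ := hv
  obtain ⟨s', hs⟩ := optionSingle_comp (R := R) hf s
  obtain ⟨t', ht⟩ := optionSingle_comp (R := R) hf t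
  exact ⟨s', t', by rw [Pi.sub_comp, hs, ht]⟩

lemma sum_prod_mul_smul_sub [Fintype κ] [CommRing R] {E : Type*} [AddCommGroup E] [Module R E]
    (a b : κ → R) (x y : κ → E) :
    ∑ st : κ × κ, (a st.1 * b st.2) • (x st.1 - y st.2) =
      (∑ t, b t) • ∑ s, a s • x s - (∑ s, a s) • ∑ t, b t • y t := by
  simp only [Fintype.sum_prod_type, smul_sub, sum_sub_distrib, sum_smul, smul_sum, mul_smul]
  congr 1
  · exact sum_congr rfl fun _ _ => sum_congr rfl fun _ _ => smul_comm _ _ _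
  · exact sum_comm

section Mass

variable [Fintype ι] [AddCommGroup R] [LinearOrder R]

def posMass (v : ι → R) : R := ∑ j, max 0 (v j)

def negMass (v : ι → R) : R := posMass (-v)

lemma posMass_nonneg [IsOrderedAddMonoid R] (v : ι → R) : 0 ≤ posMass v :=
  sum_nonneg fun _ _ => le_max_left _ _

lemma le_posMass [IsOrderedAddMonoid R] (v : ι → R) (j : ι) : v j ≤ posMass v :=
  (le_max_right _ _).trans <|
    single_le_sum (f := fun j => max 0 (v j)) (fun _ _ => le_max_left _ _) (mem_univ j)

end Mass

def padWeight [Fintype ι] [AddCommGroup R] (f : ι → R) (m : R) : Option ι → R :=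
  fun s => s.elim (m - ∑ j, f j) f

lemma sum_padWeight [Fintype ι] [AddCommGroup R] (f : ι → R) (m : R) :
    ∑ s, padWeight f m s = m := by
  simp [Fintype.sum_option, padWeight]

lemma sum_padWeight_smul_optionSingle [DecidableEq ι] [Fintype ι] [Ring R] (f : ι → R) (m : R) :
    ∑ s, padWeight f m s • optionSingle s = f := by
  funext x
  simp [padWeight, optionSingle]

section OrderedRing

variable [CommRing R] [LinearOrder R] [IsStrictOrderedRing R]

lemma abs_map_sum_smul_le [Fintype κ] {E : Type*} [AddCommGroup E] [Module R E]
    (L : E →ₗ[R] R) {c : κ → R} {w : κ → E} {B : R} (hc : ∀ k, 0 ≤ c k)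
    (hw : ∀ k, |L (w k)| ≤ B) : |L (∑ k, c k • w k)| ≤ (∑ k, c k) * B := by
  rw [map_sum, sum_mul]
  refine (abs_sum_le_sum_abs _ _).trans (sum_le_sum fun k _ => ?_)
  rw [map_smul, smul_eq_mul, abs_mul, abs_of_nonneg (hc k)]
  exact mul_le_mul_of_nonneg_left (hw k) (hc k)

theorem abs_map_le_max_posMass_negMass [DecidableEq ι] [Fintype ι] (L : (ι → R) →ₗ[R] R)
    {B : R} (hL : ∀ s t : Option ι, |L (optionSingle s - optionSingle t)| ≤ B) (v : ι → R) :
    |L v| ≤ max (posMass v) (negMass v) * B := by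
  set M := max (posMass v) (negMass v)
  have hPM : posMass v ≤ M := le_max_left _ _
  have hQM : negMass v ≤ M := le_max_right _ _
  rcases ((posMass_nonneg v).trans hPM).eq_or_lt with hM | hM
  · have hv : v = 0 := funext fun j => by
      have h₁ : v j ≤ posMass v := le_posMass v j
      have h₂ : -v j ≤ negMass v := le_posMass (-v) j
      rw [Pi.zero_apply]
      linarith
    simp [hv, ← hM]
  set a := padWeight (fun j => max 0 (v j)) M
  set b := padWeight (fun j => max 0 (-v j)) M
  have ha : ∀ s, 0 ≤ a s
    | none => sub_nonneg.2 hPM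
    | some _ => le_max_left _ _
  have hb : ∀ t, 0 ≤ b t
    | none => sub_nonneg.2 hQM
    | some _ => le_max_left _ _
  have hdecomp : M • v = ∑ st : Option ι × Option ι,
      (a st.1 * b st.2) • (optionSingle st.1 - optionSingle st.2) := by
    rw [sum_prod_mul_smul_sub, sum_padWeight, sum_padWeight, sum_padWeight_smul_optionSingle,
      sum_padWeight_smul_optionSingle, ← smul_sub]
    congr 1
    funext j
    rw [Pi.sub_apply, max_comm, max_comm 0]
    exact (max_zero_sub_max_neg_zero_eq_self _).symm
  have hmass : ∑ st : Option ι × Option ι, a st.1 * b st.2 = M * M := by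
    simp only [Fintype.sum_prod_type]
    rw [← sum_mul_sum, sum_padWeight, sum_padWeight]
  have hbound := abs_map_sum_smul_le L
    (fun st : Option ι × Option ι => mul_nonneg (ha st.1) (hb st.2)) fun st => hL st.1 st.2
  rw [← hdecomp, hmass, map_smul, smul_eq_mul, abs_mul, abs_of_pos hM, mul_assoc] at hbound
  exact le_of_mul_le_mul_left hbound hM

theorem abs_det_le_one_of_isArcRow :
    ∀ {m : ℕ} (A : Matrix (Fin m) (Fin m) R), (∀ i, IsArcRow (A i)) → |A.det| ≤ 1
  | 0, A, _ => by simp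
  | m + 1, A, hA => by
    by_cases hcycle : ∀ i, ∃ j k, A i = optionSingle (some j) - optionSingle (some k)
    · have hdet : A.det = 0 := by
        refine exists_mulVec_eq_zero_iff.1 ⟨1, one_ne_zero, funext fun i => ?_⟩
        obtain ⟨j, k, hjk⟩ := hcycle i
        simp [mulVec, dotProduct, hjk, optionSingle]
      simp [hdet]
    push Not at hcycle
    obtain ⟨i, hi⟩ := hcycle
    have hrow : ∑ j, |A i j| ≤ 1 := by
      obtain ⟨s, t, hst⟩ := hA i
      have hsingle : A i = optionSingle s ∨ A i = -optionSingle t := by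
        cases s with
        | none => exact .inr (by simpa using hst)
        | some j =>
          cases t with
          | none => exact .inl (by simpa using hst)
          | some k => exact absurd hst (hi j k)
      rcases hsingle with h | h <;> simpa [h] using sum_abs_optionSingle_le_one _
    have hminor (j : Fin (m + 1)) : |(A.submatrix i.succAbove j.succAbove).det| ≤ 1 :=
      abs_det_le_one_of_isArcRow _ fun k => (hA _).comp Fin.succAbove_right_injective
    calc |A.det| ≤ ∑ j, |A i j| := by
          rw [det_succ_row A i]
          refine (abs_sum_le_sum_abs _ _).trans (sum_le_sum fun j _ => ?_)
          rw [abs_mul, abs_mul, abs_pow, abs_neg, abs_one, one_pow, one_mul]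
          exact mul_le_of_le_one_right (abs_nonneg _) (hminor j)
      _ ≤ 1 := hrow

theorem abs_det_le_prod_of_forall_notMem_isArcRow {n : ℕ} (S : Finset (Fin n)) :
    ∀ N : Matrix (Fin n) (Fin n) R, (∀ i ∉ S, IsArcRow (N i)) →
      |N.det| ≤ ∏ i ∈ S, max (posMass (N i)) (negMass (N i)) := by
  induction S using Finset.induction_on with
  | empty =>
    exact fun N hN => by simpa using abs_det_le_one_of_isArcRow N fun i => hN i (notMem_empty i)
  | @insert a S ha ih =>
    intro N hN
    rw [prod_insert ha]
    let L := (detRowAlternating : (Fin n → R) [⋀^Fin n]→ₗ[R] R).toMultilinearMap.toLinearMap N a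
    have hL (v : Fin n → R) : L v = (N.updateRow a v).det := rfl
    have key := abs_map_le_max_posMass_negMass L
      (B := ∏ i ∈ S, max (posMass (N i)) (negMass (N i))) (fun s t => ?_) (N a)
    · rwa [hL, updateRow_eq_self] at key
    rw [hL]
    refine (ih _ fun i hi => ?_).trans_eq (prod_congr rfl fun i hi => ?_)
    · rcases eq_or_ne i a with rfl | hia
      · rw [updateRow_self]
        exact ⟨s, t, rfl⟩
      · rw [updateRow_ne hia]
        exact hN i (by simp [hia, hi])
    · rw [updateRow_ne (ne_of_mem_of_not_mem hi ha)]

end OrderedRing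

theorem schinzel_det_bound (n : ℕ) (N : Matrix (Fin n) (Fin n) ℝ) :
    |N.det| ≤ ∏ i : Fin n,
      max (∑ j : Fin n, max 0 (N i j)) (∑ j : Fin n, max 0 (-(N i j))) :=
  abs_det_le_prod_of_forall_notMem_isArcRow univ N fun i hi => absurd (mem_univ i) hi
end

section
/- Let k be a prime and f(x) = Σ_{i=0}^{k-1} a_i x^i ∈ ℤ[x]. Set A^+ = Σ_i max(0, a_i), A^- = Σ_i max(0, -a_i), and A = max(A^+, A^-). If Σ_{i=0}^{k-1} a_i = 0, then the absolute norm satisfies |N(f(ζ_k))| ≤ k · A^{k-1}. -/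
/-!
Index the coefficients by `ZMod k` and let `C` be their circulant matrix. The characters
`m ↦ ζ^(h m)` diagonalise `C`, with eigenvalues `f(ζ^h)`; as `f(1) = 0`, the product
`∏_{h ≠ 0} f(ζ^h)` is, up to sign, the coefficient of `X` in the characteristic polynomial of `C`,
i.e. the sum of the `k` principal minors of size `k - 1`. Since the coefficients sum to zero, each
row of `C` is a sum of `A` vectors `e_p - e_q`, so multilinear expansion writes each minor as a sum
of `A^(k-1)` determinants of incidence matrices of directed graphs, and these are `0` or `±1`.
-/

open Finset Matrix Polynomial

theorem exists_sum_single_eq {ι R : Type*} [Fintype ι] [DecidableEq ι] [AddCommMonoidWithOne R]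
    (b : ι → ℕ) : ∃ P : Fin (∑ i, b i) → ι, ∑ t, Pi.single (P t) (1 : R) = fun i => (b i : R) := by
  let e : Fin (∑ i, b i) ≃ Σ i, Fin (b i) := (Fintype.equivFinOfCardEq (by simp)).symm
  refine ⟨fun t => (e t).1, (e.sum_comp fun x => (Pi.single x.1 1 : ι → R)).trans ?_⟩
  rw [Fintype.sum_sigma]
  ext i
  simp [Pi.single_apply]

theorem exists_eq_sum_single_sub_single {ι : Type*} [Fintype ι] [DecidableEq ι] {v : ι → ℤ}
    (hv : ∑ i, v i = 0) :
    ∃ P Q : Fin (∑ i, (v i).toNat) → ι, v = ∑ t, (Pi.single (P t) 1 - Pi.single (Q t) 1) := by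
  have hcard : ∑ i, (-v i).toNat = ∑ i, (v i).toNat := by
    simp only [← sum_congr rfl fun i _ => Int.toNat_sub_toNat_neg (v i), sum_sub_distrib] at hv
    zify
    linarith
  obtain ⟨P, hP⟩ := exists_sum_single_eq (R := ℤ) fun i => (v i).toNat
  obtain ⟨Q, hQ⟩ := exists_sum_single_eq (R := ℤ) fun i => (-v i).toNat
  have hQ' : ∑ t, Pi.single ((Q ∘ Fin.cast hcard.symm) t) (1 : ℤ) = fun i => ((-v i).toNat : ℤ) :=
    ((finCongr hcard.symm).sum_comp fun t => (Pi.single (Q t) 1 : ι → ℤ)).trans hQ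
  refine ⟨P, Q ∘ Fin.cast hcard.symm, ?_⟩
  rw [sum_sub_distrib, hP, hQ']
  ext i
  simp

theorem max_sum_max_zero_eq_sum_toNat {ι : Type*} {s : Finset ι} {f : ι → ℤ}
    (hf : ∑ i ∈ s, f i = 0) :
    max (∑ i ∈ s, max 0 (f i)) (∑ i ∈ s, max 0 (-f i)) = ((∑ i ∈ s, (f i).toNat : ℕ) : ℤ) := by
  have hdiff : ∑ i ∈ s, max 0 (f i) - ∑ i ∈ s, max 0 (-f i) = 0 := by
    rw [← sum_sub_distrib, ← hf]
    exact sum_congr rfl fun i _ => by omega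
  rw [max_eq_left (by omega), Nat.cast_sum]
  exact sum_congr rfl fun i _ => by omega

theorem Pi.single_comp_of_injective {m n R : Type*} [Zero R] [DecidableEq m] [DecidableEq n]
    {g : m → n} (hg : g.Injective) (x : m) (r : R) : Pi.single (g x) r ∘ g = Pi.single x r := by
  ext j
  simp [Pi.single_apply, hg.eq_iff]

theorem Pi.single_comp_of_notMem_range {m n R : Type*} [Zero R] [DecidableEq n] {g : m → n}
    {y : n} (hy : y ∉ Set.range g) (r : R) : Pi.single y r ∘ g = 0 := by
  ext j
  simp [show g j ≠ y from fun h => hy ⟨j, h⟩]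

namespace Matrix

variable {m n R : Type*}

section TotallyUnimodular

variable [CommRing R]

theorem det_mem_range_signType_cast_of_row_eq_single {k : ℕ}
    {B : Matrix (Fin (k + 1)) (Fin (k + 1)) R} {i x : Fin (k + 1)} {s : SignType}
    (hi : B i = Pi.single x (s : R))
    (hminor : (B.submatrix i.succAbove x.succAbove).det ∈ Set.range SignType.cast) :
    B.det ∈ Set.range SignType.cast := by
  rw [det_succ_row B i, Fintype.sum_eq_single x fun y hy => by simp [hi, hy]]
  change _ ∈ MonoidHom.mrange SignType.castHom.toMonoidHom
  have hsign : (-1 : R) ^ ((i : ℕ) + x) ∈ MonoidHom.mrange SignType.castHom.toMonoidHom :=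
    pow_mem (MonoidHom.mem_mrange.mpr ⟨-1, by simp⟩) _
  exact mul_mem (mul_mem hsign ⟨s, by simp [hi]⟩) hminor

theorem isTotallyUnimodular_of_row_eq_single_sub_single [DecidableEq n] {A : Matrix m n R}
    {p q : m → n} (hA : ∀ i, A i = Pi.single (p i) 1 - Pi.single (q i) 1) :
    A.IsTotallyUnimodular := by
  intro k f g hf hg
  induction k with
  | zero => exact ⟨1, by simp⟩
  | succ k ih =>
    have hrow (i) :
        (A.submatrix f g) i = Pi.single (p (f i)) 1 ∘ g - Pi.single (q (f i)) 1 ∘ g := by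
      ext j
      simp [hA]
    by_cases hrange : ∀ i, p (f i) ∈ Set.range g ∧ q (f i) ∈ Set.range g
    · have hsum (i) : ∑ j, (A.submatrix f g) i j = 0 := by
        obtain ⟨⟨x, hx⟩, ⟨y, hy⟩⟩ := hrange i
        simp only [hrow, ← hx, ← hy, Pi.single_comp_of_injective hg]
        simp
      rw [det_eq_sum_row_mul_submatrix_succAbove_succAbove_det _ 0 0 (fun i _ => hsum i), hsum]
      exact ⟨0, by simp⟩
    · push Not at hrange
      obtain ⟨i, hi⟩ := hrange
      obtain ⟨x, s, hx⟩ : ∃ x, ∃ s : SignType, (A.submatrix f g) i = Pi.single x (s : R) := by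
        rw [hrow]
        by_cases hp : p (f i) ∈ Set.range g
        · obtain ⟨x, hx⟩ := hp
          refine ⟨x, 1, ?_⟩
          rw [Pi.single_comp_of_notMem_range (hi ⟨x, hx⟩), ← hx, Pi.single_comp_of_injective hg]
          simp
        · by_cases hq : q (f i) ∈ Set.range g
          · obtain ⟨y, hy⟩ := hq
            refine ⟨y, -1, ?_⟩
            rw [← hy, Pi.single_comp_of_injective hg, Pi.single_comp_of_notMem_range hp]
            simp [Pi.single_neg]
          · exact ⟨0, 0, by simp [Pi.single_comp_of_notMem_range hp, Pi.single_comp_of_notMem_range hq]⟩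
      exact det_mem_range_signType_cast_of_row_eq_single hx
        (ih _ _ (hf.comp Fin.succAbove_right_injective) (hg.comp Fin.succAbove_right_injective))

end TotallyUnimodular

section Minors

variable [CommRing R] [LinearOrder R] [IsStrictOrderedRing R]

theorem abs_le_one_of_mem_range_signType_cast {x : R} (hx : x ∈ Set.range SignType.cast) :
    |x| ≤ 1 := by
  obtain ⟨s, rfl⟩ := hx
  cases s <;> simp

theorem abs_det_le_card_pow_of_row_eq_sum [Fintype n] [DecidableEq n] {ι : Type*} [Fintype ι]
    {M : Matrix n n R} (w : n → ι → n → R) (hM : ∀ i, M i = ∑ t, w i t)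
    (hw : ∀ τ : n → ι, |(of fun i => w i (τ i)).det| ≤ 1) :
    |M.det| ≤ (Fintype.card ι : R) ^ Fintype.card n := by
  have hexpand : M.det = ∑ τ : n → ι, (of fun i => w i (τ i)).det :=
    (funext hM : (M : n → n → R) = fun i => ∑ t, w i t) ▸
      (detRowAlternating (R := R) (n := n)).toMultilinearMap.map_sum w
  calc |M.det| ≤ ∑ τ : n → ι, |(of fun i => w i (τ i)).det| := hexpand ▸ abs_sum_le_sum_abs _ _
    _ ≤ ∑ _τ : n → ι, (1 : R) := sum_le_sum fun τ _ => hw τ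
    _ = (Fintype.card ι : R) ^ Fintype.card n := by simp

end Minors

section CirculantMinors

variable [Fintype n] [DecidableEq n]

theorem abs_det_submatrix_circulant_le {G : Type*} [AddCommGroup G] [Fintype G] [DecidableEq G]
    {v : G → ℤ} (hv : ∑ x, v x = 0) (f g : n → G) :
    |((circulant v).submatrix f g).det| ≤ ((∑ x, (v x).toNat : ℕ) : ℤ) ^ Fintype.card n := by
  obtain ⟨P, Q, hPQ⟩ := exists_eq_sum_single_sub_single hv
  have hshift (a x y : G) : (Pi.single a 1 : G → ℤ) (x - y) = (Pi.single (x - a) 1 : G → ℤ) y := by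
    simp only [Pi.single_apply, eq_sub_iff_add_eq, add_comm y, eq_comm]
  simpa using abs_det_le_card_pow_of_row_eq_sum (M := (circulant v).submatrix f g)
    (fun i t => (Pi.single (f i - P t) 1 - Pi.single (f i - Q t) 1) ∘ g)
    (fun i => by ext j; simp [circulant_apply, hPQ, hshift]) fun τ =>
    abs_le_one_of_mem_range_signType_cast <|
      (isTotallyUnimodular_iff_fintype _).mp
        (isTotallyUnimodular_of_row_eq_single_sub_single (p := fun i => f i - P (τ i))
          (q := fun i => f i - Q (τ i)) fun i => rfl) n id g

theorem abs_sum_det_submatrix_circulant_le {G : Type*} [AddCommGroup G] [Fintype G]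
    [DecidableEq G] {v : G → ℤ} (hv : ∑ x, v x = 0) (r : ℕ) :
    |∑ s ∈ univ.powersetCard r, ((circulant v).submatrix (Subtype.val : s → G) Subtype.val).det|
      ≤ (Fintype.card G).choose r * ((∑ x, (v x).toNat : ℕ) : ℤ) ^ r := by
  calc _ ≤ ∑ s ∈ univ.powersetCard r,
          |((circulant v).submatrix (Subtype.val : s → G) Subtype.val).det| :=
        abs_sum_le_sum_abs _ _
    _ ≤ ∑ s ∈ univ.powersetCard r, ((∑ x, (v x).toNat : ℕ) : ℤ) ^ r := sum_le_sum fun s hs => by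
        simpa [(mem_powersetCard.mp hs).2] using
          abs_det_submatrix_circulant_le hv (Subtype.val : s → G) Subtype.val
    _ = _ := by simp [card_powersetCard]

end CirculantMinors

theorem sum_det_submatrix_eq_prod_erase_of_charpoly_eq [Fintype n] [DecidableEq n] [CommRing R]
    {M : Matrix n n R} {d : n → R} (hM : M.charpoly = ∏ i, (X - C (d i))) {i₀ : n}
    (h₀ : d i₀ = 0) :
    ∑ s ∈ univ.powersetCard (Fintype.card n - 1),
        (M.submatrix (Subtype.val : s → n) Subtype.val).det = ∏ i ∈ univ.erase i₀, d i := by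
  have hcoeff := charpoly_coeff_eq_sum_minors M (Fintype.card n - 1) (Nat.sub_le _ _)
  rw [Nat.sub_sub_self (Fintype.card_pos_iff.mpr ⟨i₀⟩), hM, ← mul_prod_erase univ _ (mem_univ i₀),
    h₀, map_zero, sub_zero, coeff_X_mul, coeff_zero_prod] at hcoeff
  simp only [coeff_sub, coeff_X_zero, coeff_C_zero, zero_sub, prod_neg,
    card_erase_of_mem (mem_univ i₀), card_univ] at hcoeff
  exact ((isUnit_neg_one.pow _).mul_left_cancel hcoeff).symm

section Circulant

variable {G K : Type*} [CommRing G] [Field K]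

def dftMatrix (ψ : AddChar G K) : Matrix G G K := of fun h i => ψ (h * i)

variable [Fintype G] [DecidableEq G]

theorem dftMatrix_mul_circulant (ψ : AddChar G K) (v : G → K) :
    dftMatrix ψ * circulant v = diagonal (fun h => ∑ m, v m * ψ (h * m)) * dftMatrix ψ := by
  ext h j
  rw [mul_apply, diagonal_mul, sum_mul, ← Equiv.sum_comp (Equiv.addRight j)]
  refine sum_congr rfl fun m _ => ?_
  simp only [dftMatrix, Equiv.coe_addRight, of_apply, mul_add, AddChar.map_add_eq_mul,
    circulant_apply, add_sub_cancel_right]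
  ring

theorem dftMatrix_mul_dftMatrix_inv {ψ : AddChar G K} (hψ : ψ.IsPrimitive) :
    dftMatrix ψ * dftMatrix ψ⁻¹ = (Fintype.card G : K) • 1 := by
  ext h h'
  simp only [mul_apply, dftMatrix, of_apply, AddChar.inv_apply, ← AddChar.map_add_eq_mul,
    show ∀ i, h * i + -(i * h') = i * (h - h') from fun i => by ring, AddChar.sum_mulShift _ hψ,
    sub_eq_zero, smul_apply, one_apply, smul_eq_mul, mul_ite, mul_one, mul_zero, Nat.cast_ite,
    Nat.cast_zero]

theorem charpoly_circulant [CharZero K] {ψ : AddChar G K} (hψ : ψ.IsPrimitive) (v : G → K) :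
    (circulant v).charpoly = ∏ h, (X - C (∑ m, v m * ψ (h * m))) := by
  have : Invertible (dftMatrix ψ) :=
    invertibleOfRightInverse _ ((Fintype.card G : K)⁻¹ • dftMatrix ψ⁻¹) <| by
      rw [mul_smul_comm, dftMatrix_mul_dftMatrix_inv hψ, smul_smul,
        inv_mul_cancel₀ (Nat.cast_ne_zero.mpr Fintype.card_ne_zero), one_smul]
  have hconj : circulant v =
      (dftMatrix ψ)⁻¹ * diagonal (fun h => ∑ m, v m * ψ (h * m)) * dftMatrix ψ := by
    rw [mul_assoc, ← dftMatrix_mul_circulant, inv_mul_cancel_left_of_invertible]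
  rw [hconj, ← charpoly_diagonal]
  exact charpoly_units_conj' (unitOfInvertible (dftMatrix ψ)) _

end Circulant

end Matrix

theorem ZMod.sum_val_eq_sum_range {M : Type*} [AddCommMonoid M] (k : ℕ) [NeZero k] (f : ℕ → M) :
    ∑ m : ZMod k, f m.val = ∑ i ∈ range k, f i := by
  obtain ⟨n, rfl⟩ := Nat.exists_eq_succ_of_ne_zero (NeZero.ne k)
  exact Fin.sum_univ_eq_sum_range f (n + 1)

theorem ZMod.prod_erase_zero_val_eq_prod_Ico {M : Type*} [CommMonoid M] (k : ℕ) [NeZero k]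
    (f : ℕ → M) : ∏ x ∈ univ.erase (0 : ZMod k), f x.val = ∏ i ∈ Ico 1 k, f i := by
  refine prod_nbij' ZMod.val (fun i => (i : ZMod k)) (fun x hx => ?_) (fun i hi => ?_)
    (fun x _ => ZMod.natCast_zmod_val x) (fun i hi => ZMod.val_natCast_of_lt (mem_Ico.mp hi).2)
    fun _ _ => rfl
  · simpa [ZMod.val_lt, Nat.one_le_iff_ne_zero] using hx
  · simp only [mem_Ico] at hi
    simpa [ZMod.natCast_eq_zero_iff] using Nat.not_dvd_of_pos_of_lt (by omega) hi.2

theorem AddChar.sum_mul_zmodChar_mul {R : Type*} [CommRing R] {k : ℕ} [NeZero k] {ζ : R}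
    (hζ : ζ ^ k = 1) (c : ℕ → R) (h : ZMod k) :
    ∑ m : ZMod k, c m.val * zmodChar k hζ (h * m) = ∑ i ∈ range k, c i * (ζ ^ h.val) ^ i := by
  rw [← ZMod.sum_val_eq_sum_range]
  refine sum_congr rfl fun m _ => ?_
  rw [← pow_mul, ← zmodChar_apply' hζ, Nat.cast_mul, ZMod.natCast_zmod_val, ZMod.natCast_zmod_val]

theorem norm_bound_sum_zero (k : ℕ) (hk : k.Prime) (a : ℕ → ℤ)
    (hs : ∑ i ∈ Finset.range k, a i = 0) (ζ : ℂ) (hζ : IsPrimitiveRoot ζ k) :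
    ‖∏ h ∈ Finset.Ico 1 k, ∑ i ∈ Finset.range k, (a i : ℂ) * (ζ ^ h) ^ i‖
      ≤ (k : ℝ) *
        ((max (∑ i ∈ Finset.range k, max 0 (a i))
              (∑ i ∈ Finset.range k, max 0 (-(a i))) : ℤ) : ℝ) ^ (k - 1) := by
  have : NeZero k := ⟨hk.ne_zero⟩
  have hv : ∑ m : ZMod k, a m.val = 0 := (ZMod.sum_val_eq_sum_range k a).trans hs
  have hminors := sum_det_submatrix_eq_prod_erase_of_charpoly_eq
    (charpoly_circulant (AddChar.zmodChar_primitive_of_primitive_root k hζ)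
      fun m : ZMod k => (a m.val : ℂ)) (i₀ := 0) (by simp [← Int.cast_sum, hv])
  simp only [AddChar.sum_mul_zmodChar_mul _ fun i => (a i : ℂ)] at hminors
  rw [← ZMod.prod_erase_zero_val_eq_prod_Ico, ← hminors, max_sum_max_zero_eq_sum_toNat hs,
    ← ZMod.sum_val_eq_sum_range k fun i => (a i).toNat, ZMod.card]
  have hbound := abs_sum_det_submatrix_circulant_le hv (k - 1)
  rw [ZMod.card, Nat.choose_symm hk.one_lt.le, Nat.choose_one_right] at hbound
  simp only [← map_circulant, submatrix_map, ← Int.cast_det, ← Int.cast_sum, Complex.norm_intCast]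
  exact_mod_cast hbound
end

section
/- Let k be a prime and f(x) = Σ_{i=0}^{k-1} a_i x^i ∈ ℤ[x] with s := Σ_{i=0}^{k-1} a_i ≠ 0. Set A^+ = Σ_i max(0, a_i), A^- = Σ_i max(0, -a_i), and A = max(A^+, A^-). Then |N(f(ζ_k))| ≤ A^k / |s|. -/
/-!
Split `f = P - Q` with `P, Q` of nonnegative coefficients and, say, `Q(1) < P(1) = c`.
Since `‖P(x)‖, ‖Q(x)‖ ≤ c` on the unit circle, `‖P(x) - Q(x)‖ ≤ c ‖1 - z(x)‖` with
`z = conj P · Q / c²`, and `‖z‖ < 1`. On `k`-th roots of unity `conj P(x) = P(x^(k-1))`, so every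
power of `z` is again a polynomial with nonnegative coefficients, and its sum over all `k`-th
roots of unity has nonnegative real part. Expanding `-log (1 - z)` then shows
`∑ log ‖1 - z(ζ^h)‖ ≤ 0`, i.e. `∏_h ‖f(ζ^h)‖ ≤ c^k`; the factor `h = 0` is `|f(1)|`.
-/

open Polynomial NNReal Finset ComplexConjugate

lemma re_geom_sum_nonneg_of_pow_eq_one {ω : ℂ} {k : ℕ} (hω : ω ^ k = 1) :
    0 ≤ (∑ h ∈ range k, ω ^ h).re := by
  rcases eq_or_ne ω 1 with rfl | hω1
  · simp
  · simp [geom_sum_eq hω1, hω]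

lemma conj_eq_pow_pred_of_pow_eq_one {x : ℂ} {k : ℕ} (hx : x ^ k = 1) (hk : k ≠ 0) :
    conj x = x ^ (k - 1) := by
  have hx1 : ‖x‖ = 1 := Complex.norm_eq_one_of_pow_eq_one hx hk
  rw [← Complex.inv_eq_conj hx1, pow_sub₀ x (norm_ne_zero_iff.1 (by simp [hx1]))
    (Nat.one_le_iff_ne_zero.2 hk), hx, pow_one, one_mul]

lemma conj_aeval_nnreal (P : ℝ≥0[X]) (x : ℂ) : conj (aeval x P) = aeval (conj x) P :=
  (aeval_algHom_apply (Complex.conjAe.toAlgHom.restrictScalars ℝ≥0) x P).symm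

lemma norm_aeval_le_eval_one (P : ℝ≥0[X]) {x : ℂ} (hx : ‖x‖ ≤ 1) :
    ‖aeval x P‖ ≤ P.eval 1 := by
  rw [aeval_eq_sum_range, eval_eq_sum_range, NNReal.coe_sum]
  refine (norm_sum_le _ _).trans (sum_le_sum fun i _ => ?_)
  rw [NNReal.smul_def, norm_smul, norm_pow]
  simp only [one_pow, mul_one, Real.norm_eq_abs, NNReal.abs_eq]
  exact mul_le_of_le_one_right (by positivity) (pow_le_one₀ (norm_nonneg _) hx)

lemma re_sum_aeval_pow_nonneg {ζ : ℂ} {k : ℕ} (hζ : ζ ^ k = 1) (S : ℝ≥0[X]) :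
    0 ≤ (∑ h ∈ range k, aeval (ζ ^ h) S).re := by
  simp only [aeval_eq_sum_range, ← pow_mul]
  rw [sum_comm, Complex.re_sum]
  refine sum_nonneg fun i _ => ?_
  rw [← smul_sum, NNReal.smul_def, Complex.smul_re, smul_eq_mul]
  refine mul_nonneg (S.coeff i).2 ?_
  simp_rw [mul_comm _ i, pow_mul]
  exact re_geom_sum_nonneg_of_pow_eq_one (by rw [← pow_mul, mul_comm, pow_mul, hζ, one_pow])

lemma prod_norm_one_sub_le_one {ι : Type*} (s : Finset ι) (z : ι → ℂ)
    (hz : ∀ i ∈ s, ‖z i‖ < 1) (hre : ∀ m : ℕ, 0 ≤ (∑ i ∈ s, z i ^ m).re) :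
    ∏ i ∈ s, ‖1 - z i‖ ≤ 1 := by
  have hne : ∀ i ∈ s, 1 - z i ≠ 0 := fun i hi h => by
    simpa [← sub_eq_zero.1 h] using hz i hi
  have hlog : HasSum (fun n : ℕ => (∑ i ∈ s, z i ^ n) / n)
      (-∑ i ∈ s, Complex.log (1 - z i)) := by
    simpa only [sum_div, ← sum_neg_distrib] using
      hasSum_sum fun i hi => Complex.hasSum_taylorSeries_neg_log (hz i hi)
  have hlog_re : 0 ≤ (-∑ i ∈ s, Complex.log (1 - z i)).re :=
    (Complex.reCLM.hasSum hlog).nonneg fun n => by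
      simpa [Complex.div_natCast_re] using div_nonneg (hre n) n.cast_nonneg
  calc ∏ i ∈ s, ‖1 - z i‖ = Real.exp (∑ i ∈ s, Real.log ‖1 - z i‖) := by
        rw [Real.exp_sum]
        exact prod_congr rfl fun i hi => (Real.exp_log (norm_pos_iff.2 (hne i hi))).symm
    _ ≤ 1 := by
        rw [Real.exp_le_one_iff]
        simpa [Complex.re_sum, Complex.log_re] using hlog_re

lemma norm_sub_le_mul_norm_one_sub_conj_mul_div {a b : ℂ} {c : ℝ} (hc : 0 < c)
    (ha : ‖a‖ ≤ c) (hb : ‖b‖ ≤ c) :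
    ‖a - b‖ ≤ c * ‖1 - conj a * b / (c : ℂ) ^ 2‖ := by
  have hc2 : (c : ℂ) ^ 2 ≠ 0 := by exact_mod_cast (pow_pos hc 2).ne'
  rw [one_sub_div hc2, norm_div, norm_pow, Complex.norm_real, Real.norm_of_nonneg hc.le,
    mul_div_assoc', sq c, mul_div_mul_left _ _ hc.ne', le_div_iff₀ hc]
  have key : Complex.normSq ((c : ℂ) ^ 2 - conj a * b) - c ^ 2 * Complex.normSq (a - b)
      = (c ^ 2 - Complex.normSq a) * (c ^ 2 - Complex.normSq b) := by
    simp only [Complex.normSq_apply, sq, Complex.sub_re, Complex.sub_im, Complex.mul_re,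
      Complex.mul_im, Complex.conj_re, Complex.conj_im, Complex.ofReal_re, Complex.ofReal_im]
    ring
  have ha2 : Complex.normSq a ≤ c ^ 2 := by rw [Complex.normSq_eq_norm_sq]; gcongr
  have hb2 : Complex.normSq b ≤ c ^ 2 := by rw [Complex.normSq_eq_norm_sq]; gcongr
  rw [← sq_le_sq₀ (by positivity) (norm_nonneg _), mul_pow, Complex.sq_norm, Complex.sq_norm]
  nlinarith [mul_nonneg (sub_nonneg.2 ha2) (sub_nonneg.2 hb2)]

lemma prod_norm_aeval_sub_le {ζ : ℂ} {k : ℕ} (hζ : ζ ^ k = 1) (P Q : ℝ≥0[X])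
    (hPQ : Q.eval 1 < P.eval 1) :
    ∏ h ∈ range k, ‖aeval (ζ ^ h) P - aeval (ζ ^ h) Q‖ ≤ ((P.eval 1 : ℝ≥0) : ℝ) ^ k := by
  obtain rfl | hk := eq_or_ne k 0
  · simp
  set c := P.eval 1
  have hc : 0 < c := pos_of_gt hPQ
  have hζh : ∀ h, (ζ ^ h) ^ k = 1 := fun h => by rw [← pow_mul, mul_comm, pow_mul, hζ, one_pow]
  have hnorm : ∀ h, ‖ζ ^ h‖ ≤ 1 := fun h => (Complex.norm_eq_one_of_pow_eq_one (hζh h) hk).le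
  set R : ℝ≥0[X] := (c ^ 2)⁻¹ • (P.comp (X ^ (k - 1)) * Q)
  have hR : ∀ h, aeval (ζ ^ h) R = conj (aeval (ζ ^ h) P) * aeval (ζ ^ h) Q / (c : ℂ) ^ 2 := by
    intro h
    rw [map_smul, map_mul, aeval_comp, map_pow, aeval_X,
      ← conj_eq_pow_pred_of_pow_eq_one (hζh h) hk, ← conj_aeval_nnreal, NNReal.smul_def,
      Complex.real_smul]
    push_cast
    ring
  have hR_lt : ∀ h ∈ range k, ‖aeval (ζ ^ h) R‖ < 1 := fun h _ => by
    rw [hR, norm_div, norm_mul, Complex.norm_conj, norm_pow, Complex.norm_real,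
      Real.norm_of_nonneg c.coe_nonneg, div_lt_one (by positivity), sq]
    exact mul_lt_mul' (norm_aeval_le_eval_one P (hnorm h))
      ((norm_aeval_le_eval_one Q (hnorm h)).trans_lt hPQ) (norm_nonneg _) hc
  have hR_re : ∀ m : ℕ, 0 ≤ (∑ h ∈ range k, aeval (ζ ^ h) R ^ m).re := fun m => by
    simpa only [map_pow] using re_sum_aeval_pow_nonneg hζ (R ^ m)
  calc ∏ h ∈ range k, ‖aeval (ζ ^ h) P - aeval (ζ ^ h) Q‖
      ≤ ∏ h ∈ range k, ((c : ℝ) * ‖1 - aeval (ζ ^ h) R‖) := by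
        refine prod_le_prod (fun _ _ => norm_nonneg _) fun h _ => ?_
        rw [hR]
        exact norm_sub_le_mul_norm_one_sub_conj_mul_div hc (norm_aeval_le_eval_one P (hnorm h))
          ((norm_aeval_le_eval_one Q (hnorm h)).trans hPQ.le)
    _ = c ^ k * ∏ h ∈ range k, ‖1 - aeval (ζ ^ h) R‖ := by
        rw [prod_mul_distrib, prod_const, card_range]
    _ ≤ c ^ k := mul_le_of_le_one_right (by positivity) (prod_norm_one_sub_le_one _ _ hR_lt hR_re)

lemma prod_norm_aeval_sub_le_max {ζ : ℂ} {k : ℕ} (hζ : ζ ^ k = 1) (P Q : ℝ≥0[X]) :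
    ∏ h ∈ range k, ‖aeval (ζ ^ h) P - aeval (ζ ^ h) Q‖
      ≤ ((max (P.eval 1) (Q.eval 1) : ℝ≥0) : ℝ) ^ k := by
  rcases lt_trichotomy (Q.eval 1) (P.eval 1) with hlt | heq | hgt
  · simpa [max_eq_left hlt.le] using prod_norm_aeval_sub_le hζ P Q hlt
  · obtain rfl | hk := eq_or_ne k 0
    · simp
    refine le_of_eq_of_le (prod_eq_zero (mem_range.2 (Nat.pos_of_ne_zero hk)) ?_) (by positivity)
    rw [pow_zero, ← map_one (algebraMap ℝ≥0 ℂ), aeval_algebraMap_apply_eq_algebraMap_eval,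
      aeval_algebraMap_apply_eq_algebraMap_eval, heq, sub_self, norm_zero]
  · simpa [max_eq_right hgt.le, norm_sub_rev] using prod_norm_aeval_sub_le hζ Q P hgt

noncomputable def posPartPoly (n : ℕ) (a : ℕ → ℝ) : ℝ≥0[X] :=
  ∑ i ∈ range n, monomial i (a i).toNNReal

lemma aeval_posPartPoly_sub (n : ℕ) (a : ℕ → ℝ) (x : ℂ) :
    aeval x (posPartPoly n a) - aeval x (posPartPoly n (-a))
      = ∑ i ∈ range n, (a i : ℂ) * x ^ i := by
  simp only [posPartPoly, map_sum, aeval_monomial, ← sum_sub_distrib, ← sub_mul, Pi.neg_apply]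
  refine sum_congr rfl fun i _ => congrArg (· * x ^ i) ?_
  change (((a i).toNNReal : ℝ) : ℂ) - (((-a i).toNNReal : ℝ) : ℂ) = _
  rw [Real.coe_toNNReal', Real.coe_toNNReal', ← Complex.ofReal_sub,
    max_zero_sub_max_neg_zero_eq_self]

lemma coe_eval_one_posPartPoly (n : ℕ) (a : ℕ → ℝ) :
    (((posPartPoly n a).eval 1 : ℝ≥0) : ℝ) = ∑ i ∈ range n, max 0 (a i) := by
  simp [posPartPoly, eval_finsetSum, max_comm]

theorem norm_bound_sum_ne_zero_general (k : ℕ) (a : ℕ → ℤ)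
    (hs : ∑ i ∈ Finset.range k, a i ≠ 0) (ζ : ℂ) (hζ : IsPrimitiveRoot ζ k) :
    ‖∏ h ∈ Finset.Ico 1 k, ∑ i ∈ Finset.range k, (a i : ℂ) * (ζ ^ h) ^ i‖
      ≤ ((max (∑ i ∈ Finset.range k, max 0 (a i))
              (∑ i ∈ Finset.range k, max 0 (-(a i))) : ℤ) : ℝ) ^ k
          / |((∑ i ∈ Finset.range k, a i : ℤ) : ℝ)| := by
  set f : ℕ → ℂ := fun h => ∑ i ∈ range k, (a i : ℂ) * (ζ ^ h) ^ i
  have hk : 0 < k := Nat.pos_of_ne_zero (by rintro rfl; exact hs rfl)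
  have hs_pos : 0 < |((∑ i ∈ range k, a i : ℤ) : ℝ)| := abs_pos.2 (by exact_mod_cast hs)
  have hf0 : ‖f 0‖ = |((∑ i ∈ range k, a i : ℤ) : ℝ)| := by
    simp only [f, pow_zero, one_pow, mul_one]
    exact_mod_cast Complex.norm_intCast _
  have hbound := prod_norm_aeval_sub_le_max hζ.pow_eq_one
    (posPartPoly k fun i => (a i : ℝ)) (posPartPoly k (-fun i => (a i : ℝ)))
  simp only [aeval_posPartPoly_sub, NNReal.coe_max, coe_eval_one_posPartPoly, Pi.neg_apply,
    Complex.ofReal_intCast] at hbound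
  rw [le_div_iff₀ hs_pos]
  calc ‖∏ h ∈ Ico 1 k, f h‖ * |((∑ i ∈ range k, a i : ℤ) : ℝ)| = ∏ h ∈ range k, ‖f h‖ := by
        rw [prod_range_eq_mul_Ico _ hk, norm_prod, hf0, mul_comm]
    _ ≤ _ := by exact_mod_cast hbound

theorem norm_bound_sum_ne_zero (k : ℕ) (hk : k.Prime) (a : ℕ → ℤ)
    (hs : ∑ i ∈ Finset.range k, a i ≠ 0) (ζ : ℂ) (hζ : IsPrimitiveRoot ζ k) :
    ‖∏ h ∈ Finset.Ico 1 k, ∑ i ∈ Finset.range k, (a i : ℂ) * (ζ ^ h) ^ i‖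
      ≤ ((max (∑ i ∈ Finset.range k, max 0 (a i))
              (∑ i ∈ Finset.range k, max 0 (-(a i))) : ℤ) : ℝ) ^ k
          / |((∑ i ∈ Finset.range k, a i : ℤ) : ℝ)| :=
  norm_bound_sum_ne_zero_general k a hs ζ hζ
end

section
/- Let ζ_k be a primitive k-th root of unity in ℂ and let a, b be integers with ζ_k^a ≠ 1. If 1 + ζ_k^a - ζ_k^b = 0, then 6 divides k and (a mod k, b mod k) ∈ {(k/3, k/6), (2k/3, 5k/6)}. -/
/-!
Put `z = ζ ^ a`, so that `ζ ^ b = 1 + z`. Both `z` and `1 + z` lie on the unit circle, so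
conjugation inverts them and `(1 + z) (1 + z⁻¹) = 1`, i.e. `z ^ 2 + z + 1 = 0`. Hence `w = 1 + z`
satisfies `w ^ 2 = z ≠ 1` and `w ^ 3 = -1`: it is a primitive sixth root of unity. For the residue
`s = b % k` this says `k ∣ 6 s` but `k ∤ 2 s`, `k ∤ 3 s`, which leaves only `s = k / 6` and
`s = 5 k / 6`; finally `ζ ^ a = w ^ 2` gives `a ≡ 2 b [ZMOD k]`.
-/

open ComplexConjugate

theorem Complex.sq_add_self_add_one_eq_zero {z : ℂ} (hz : ‖z‖ = 1) (hz' : ‖1 + z‖ = 1) :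
    z ^ 2 + z + 1 = 0 := by
  have hz0 : z ≠ 0 := norm_ne_zero_iff.1 (hz ▸ one_ne_zero)
  have hconj : (1 + z) * (1 + z⁻¹) = 1 := by
    have : conj (1 + z) = 1 + z⁻¹ := by rw [map_add, map_one, Complex.inv_eq_conj hz]
    rw [← this, Complex.mul_conj', hz']
    norm_num
  linear_combination z * hconj - (1 + z) * mul_inv_cancel₀ hz0

theorem IsPrimitiveRoot.zpow_emod {G₀ : Type*} [CommGroupWithZero G₀] {ζ : G₀} {k : ℕ}
    (hζ : IsPrimitiveRoot ζ k) (a : ℤ) : ζ ^ (a % (k : ℤ)) = ζ ^ a := by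
  rcases eq_or_ne k 0 with rfl | hk
  · rw [Nat.cast_zero, Int.emod_zero]
  conv_rhs => rw [← Int.emod_add_mul_ediv a k]
  rw [zpow_add₀ (hζ.ne_zero hk), zpow_mul, hζ.zpow_eq_one, one_zpow, mul_one]

theorem IsPrimitiveRoot.zpow_pow_eq_one_iff_dvd {G₀ : Type*} [CommGroupWithZero G₀] {ζ : G₀}
    {k : ℕ} (hζ : IsPrimitiveRoot ζ k) (a : ℤ) (n : ℕ) :
    (ζ ^ a) ^ n = 1 ↔ (k : ℤ) ∣ n * a := by
  rw [← zpow_natCast, ← zpow_mul, hζ.zpow_eq_one_iff_dvd, mul_comm]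

theorem Int.eq_six_mul_or_six_mul_eq_five_mul {k s : ℤ} (hs₀ : 0 ≤ s) (hsk : s < k)
    (h6 : k ∣ 6 * s) (h2 : ¬ k ∣ 2 * s) (h3 : ¬ k ∣ 3 * s) : k = 6 * s ∨ 6 * s = 5 * k := by
  obtain ⟨m, hm⟩ := h6
  have hm₀ : 0 ≤ m := by nlinarith
  have hm₆ : m < 6 := by nlinarith
  interval_cases m
  · exact absurd ⟨0, by omega⟩ h2
  · omega
  · exact absurd ⟨1, by omega⟩ h3
  · exact absurd ⟨1, by omega⟩ h2
  · exact absurd ⟨2, by omega⟩ h3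
  · omega

theorem Int.dvd_six_and_eq_of_dvd_sub_two_mul {k r s : ℤ} (hr₀ : 0 ≤ r) (hrk : r < k)
    (hs : k = 6 * s ∨ 6 * s = 5 * k) (hrs : k ∣ r - 2 * s) :
    6 ∣ k ∧ ((r = k / 3 ∧ s = k / 6) ∨ (r = 2 * k / 3 ∧ s = 5 * k / 6)) := by
  rcases hs with hs | hs
  · have : r - 2 * s = 0 := Int.eq_zero_of_abs_lt_dvd hrs (abs_lt.2 ⟨by omega, by omega⟩)
    omega
  · have : r - 2 * s + k = 0 :=
      Int.eq_zero_of_abs_lt_dvd (dvd_add hrs dvd_rfl) (abs_lt.2 ⟨by omega, by omega⟩)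
    omega

theorem vanishing_three_terms (k : ℕ) (hk : 0 < k) (ζ : ℂ)
    (hζ : IsPrimitiveRoot ζ k) (a b : ℤ) (ha : ζ ^ a ≠ 1)
    (h : 1 + ζ ^ a - ζ ^ b = 0) :
    6 ∣ k ∧
      ((a % (k : ℤ) = (k : ℤ) / 3 ∧ b % (k : ℤ) = (k : ℤ) / 6) ∨
        (a % (k : ℤ) = 2 * (k : ℤ) / 3 ∧ b % (k : ℤ) = 5 * (k : ℤ) / 6)) := by
  have hk' : (0 : ℤ) < k := by exact_mod_cast hk
  have hw : ζ ^ b = 1 + ζ ^ a := by linear_combination -h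
  have hnorm (n : ℤ) : ‖ζ ^ n‖ = 1 := by rw [norm_zpow, hζ.norm'_eq_one hk.ne', one_zpow]
  have hcube := Complex.sq_add_self_add_one_eq_zero (hnorm a) (hw ▸ hnorm b)
  set r := a % (k : ℤ)
  set s := b % (k : ℤ)
  have hw2 : (ζ ^ s) ^ 2 = ζ ^ r := by
    rw [hζ.zpow_emod, hζ.zpow_emod, hw]; linear_combination hcube
  have hw3 : (ζ ^ s) ^ 3 = -1 := by
    rw [hζ.zpow_emod, hw]; linear_combination (ζ ^ a + 2) * hcube
  have h6 : (k : ℤ) ∣ 6 * s := by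
    rw [← Nat.cast_ofNat, ← hζ.zpow_pow_eq_one_iff_dvd, show 6 = 3 * 2 from rfl, pow_mul, hw3]
    norm_num
  have h2 : ¬ (k : ℤ) ∣ 2 * s := by
    rw [← Nat.cast_ofNat, ← hζ.zpow_pow_eq_one_iff_dvd, hw2, hζ.zpow_emod]; exact ha
  have h3 : ¬ (k : ℤ) ∣ 3 * s := by
    rw [← Nat.cast_ofNat, ← hζ.zpow_pow_eq_one_iff_dvd, hw3]; norm_num
  have hrs : (k : ℤ) ∣ r - 2 * s := by
    rw [← hζ.zpow_eq_one_iff_dvd, zpow_sub₀ (hζ.ne_zero hk.ne'), mul_comm, zpow_mul,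
      zpow_ofNat, hw2, div_self (zpow_ne_zero _ (hζ.ne_zero hk.ne'))]
  have hs := Int.eq_six_mul_or_six_mul_eq_five_mul (Int.emod_nonneg b hk'.ne')
    (Int.emod_lt_of_pos b hk') h6 h2 h3
  obtain ⟨h6k, hres⟩ := Int.dvd_six_and_eq_of_dvd_sub_two_mul (Int.emod_nonneg a hk'.ne')
    (Int.emod_lt_of_pos a hk') hs hrs
  exact ⟨Int.natCast_dvd_natCast.1 h6k, hres⟩
end

section
/- Let ζ_k be a primitive k-th root of unity in ℂ and let a, b be integers with 0, a mod k, b mod k pairwise distinct. Then 1 + ζ_k^a - 2ζ_k^b ≠ 0. -/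
/-! If `1 + ζ ^ a = 2 ζ ^ b`, the midpoint of the unit vectors `1` and `ζ ^ a` lies on the unit
circle, which by strict convexity of `ℂ` forces `ζ ^ a = 1`, i.e. `k ∣ a`. -/

theorem eq_of_norm_eq_of_add_eq_two_smul {E : Type*} [NormedAddCommGroup E] [NormedSpace ℝ E]
    [StrictConvexSpace ℝ E] {x y z : E} (hxy : ‖x‖ = ‖y‖) (hz : ‖z‖ = ‖x‖)
    (h : x + y = (2 : ℝ) • z) : x = y := by
  refine eq_of_norm_eq_of_norm_add_eq hxy ?_
  rw [h, norm_smul, hz, ← hxy]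
  norm_num
  ring

theorem IsPrimitiveRoot.norm_zpow_eq_one {ζ : ℂ} {k : ℕ} (hζ : IsPrimitiveRoot ζ k) (hk : k ≠ 0)
    (n : ℤ) : ‖ζ ^ n‖ = 1 := by
  rw [norm_zpow, hζ.norm'_eq_one hk, one_zpow]

theorem no_vanishing_one_two_general (k : ℕ) (hk : 0 < k) (ζ : ℂ)
    (hζ : IsPrimitiveRoot ζ k) (a b : ℤ)
    (ha : a % (k : ℤ) ≠ 0) :
    1 + ζ ^ a - 2 * ζ ^ b ≠ 0 := by
  intro h
  have hsum : 1 + ζ ^ a = (2 : ℝ) • ζ ^ b := by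
    rw [Complex.real_smul]
    push_cast
    linear_combination h
  have hnorm (n : ℤ) : ‖ζ ^ n‖ = ‖(1 : ℂ)‖ := by rw [norm_one, hζ.norm_zpow_eq_one hk.ne']
  have hζa : 1 = ζ ^ a := eq_of_norm_eq_of_add_eq_two_smul (hnorm a).symm (hnorm b) hsum
  exact ha (Int.emod_eq_zero_of_dvd ((hζ.zpow_eq_one_iff_dvd a).mp hζa.symm))

theorem no_vanishing_one_two (k : ℕ) (hk : 0 < k) (ζ : ℂ)
    (hζ : IsPrimitiveRoot ζ k) (a b : ℤ)
    (ha : a % (k : ℤ) ≠ 0) (hb : b % (k : ℤ) ≠ 0)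
    (hab : a % (k : ℤ) ≠ b % (k : ℤ)) :
    1 + ζ ^ a - 2 * ζ ^ b ≠ 0 :=
  no_vanishing_one_two_general k hk ζ hζ a b ha
end

section
/- Let q be a power of a prime p, and let e, k be divisors of q-1 with e, k > 1 and q = ek+1. Suppose p > (3k/φ(k))^{φ(k)/(2·ord_k(p))}, k is not divisible by 6, and 2 is not an e-th power residue in 𝔽_q. Then there are no x, y ∈ 𝔽_q which are both nonzero e-th powers satisfying 1 + x = y; i.e., the cyclotomic number (0,0) of order e equals 0. -/
/-!
If `1 + x = y` with `x`, `y` nonzero `e`-th powers, then `x = ζ₀ ^ a` and `y = ζ₀ ^ b` for a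
primitive `k`-th root of unity `ζ₀ ∈ 𝔽_q`, and `ζ₀ ^ a`, `ζ₀ ^ b`, `ζ₀ ^ (b - a)` are all `≠ 1`
(the first because `2` is not an `e`-th power). Lift `ζ₀` to a primitive root `ζ` in the ring of
integers of `ℚ(ζ_k)`: the element `α = ζ ^ b - ζ ^ a - 1` lies in the kernel of `ζ ↦ ζ₀`, a prime
above `p` whose residue field contains a primitive `k`-th root of unity, so `p ^ ord_k(p)` divides
`N(α)`. As `6 ∤ k`, `α ≠ 0`: a relation `1 + X = Y` between complex roots of unity forces `X`
to be a primitive cube root. On the other hand AM-GM gives `N(α)² ≤ (∑_σ |σ α|² / φ(k)) ^ φ(k)`;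
the embeddings `σ` send `ζ` to distinct `k`-th roots of unity, so orthogonality of characters gives
`∑_σ |σ α|² ≤ 3k`. Hence `p ^ (2 ord_k(p)) ≤ (3k / φ(k)) ^ φ(k)`, contradicting the bound on `p`.
-/

open Finset ComplexConjugate NumberField Polynomial

theorem geom_sum_eq_zero_of_pow_eq_one {K : Type*} [DivisionRing K] {z : K} {k : ℕ}
    (hz : z ^ k = 1) (h1 : z ≠ 1) : ∑ j ∈ range k, z ^ j = 0 := by
  rw [geom_sum_eq h1, hz, sub_self, zero_div]

namespace Complex

theorem conj_eq_inv_of_pow_eq_one {z : ℂ} {k : ℕ} (hk : k ≠ 0) (hz : z ^ k = 1) :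
    conj z = z⁻¹ :=
  (inv_eq_conj (norm_eq_one_of_pow_eq_one hz hk)).symm

theorem six_dvd_of_pow_eq_one_of_one_add_pow_eq_one {k : ℕ} (hk : k ≠ 0) {X : ℂ}
    (hX : X ^ k = 1) (h1X : (1 + X) ^ k = 1) : 6 ∣ k := by
  have hX0 : X ≠ 0 := by rintro rfl; simp [hk] at hX
  have h1X0 : 1 + X ≠ 0 := by intro h; simp [h, hk] at h1X
  have hcube : X ^ 2 + X + 1 = 0 := by
    have h := conj_eq_inv_of_pow_eq_one hk h1X
    rw [map_add, map_one, conj_eq_inv_of_pow_eq_one hk hX] at h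
    field_simp at h
    linear_combination h
  have hX1 : X ≠ 1 := by rintro rfl; norm_num at hcube
  have h3 : 3 ∣ k := by
    have : orderOf X = 3 := orderOf_eq_prime (by linear_combination (X - 1) * hcube) hX1
    exact this ▸ orderOf_dvd_of_pow_eq_one hX
  have h2 : 2 ∣ k := by
    have : (-1 : ℂ) ^ k = 1 := by
      calc (-1 : ℂ) ^ k = (-1) ^ k * (X ^ k) ^ 2 := by rw [hX, one_pow, mul_one]
        _ = (-X ^ 2) ^ k := by ring
        _ = 1 := by rw [← h1X]; congr 1; linear_combination -hcube
    exact even_iff_two_dvd.mp ((neg_one_pow_eq_one_iff_even (by norm_num)).mp this)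
  exact Nat.Coprime.mul_dvd_of_dvd_of_dvd (by norm_num) h2 h3

theorem sum_range_normSq_pow_sub_pow_sub_one {k : ℕ} (hk : k ≠ 0) {X Y : ℂ}
    (hX : X ^ k = 1) (hY : Y ^ k = 1) (hX1 : X ≠ 1) (hY1 : Y ≠ 1) (hXY : X ≠ Y) :
    ∑ j ∈ range k, normSq (Y ^ j - X ^ j - 1) = 3 * k := by
  have hX0 : X ≠ 0 := by rintro rfl; simp [hk] at hX
  have hY0 : Y ≠ 0 := by rintro rfl; simp [hk] at hY
  have hroot {z : ℂ} (hz : z ^ k = 1) (hz1 : z ≠ 1) := geom_sum_eq_zero_of_pow_eq_one hz hz1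
  have hterm (j : ℕ) : (normSq (Y ^ j - X ^ j - 1) : ℂ) =
      3 - (Y * X⁻¹) ^ j - Y ^ j - (X * Y⁻¹) ^ j + X ^ j - Y⁻¹ ^ j + X⁻¹ ^ j := by
    rw [← mul_conj, map_sub, map_sub, map_one, map_pow, map_pow,
      conj_eq_inv_of_pow_eq_one hk hX, conj_eq_inv_of_pow_eq_one hk hY]
    have hYY : Y ^ j * Y⁻¹ ^ j = 1 := by rw [← mul_pow, mul_inv_cancel₀ hY0, one_pow]
    have hXX : X ^ j * X⁻¹ ^ j = 1 := by rw [← mul_pow, mul_inv_cancel₀ hX0, one_pow]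
    rw [mul_pow, mul_pow]
    linear_combination hYY + hXX
  have : (∑ j ∈ range k, normSq (Y ^ j - X ^ j - 1) : ℂ) = 3 * k := by
    simp only [hterm, sum_add_distrib, sum_sub_distrib]
    rw [hroot (z := Y * X⁻¹) (by rw [mul_pow, inv_pow, hX, hY]; simp) (by
        rwa [ne_eq, mul_inv_eq_one₀ hX0, eq_comm]),
      hroot (z := X * Y⁻¹) (by rw [mul_pow, inv_pow, hX, hY]; simp) (by
        rwa [ne_eq, mul_inv_eq_one₀ hY0]),
      hroot hX hX1, hroot hY hY1,
      hroot (z := Y⁻¹) (by rw [inv_pow, hY, inv_one]) (inv_ne_one.mpr hY1),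
      hroot (z := X⁻¹) (by rw [inv_pow, hX, inv_one]) (inv_ne_one.mpr hX1)]
    simp [mul_comm]
  exact_mod_cast this

end Complex

theorem Real.prod_le_arith_mean_pow {ι : Type*} (s : Finset ι) {f : ι → ℝ}
    (hf : ∀ i ∈ s, 0 ≤ f i) : ∏ i ∈ s, f i ≤ ((∑ i ∈ s, f i) / #s) ^ #s := by
  rcases s.eq_empty_or_nonempty with rfl | hs
  · simp
  have hn : (0 : ℝ) < #s := by exact_mod_cast hs.card_pos
  have hmean := Real.geom_mean_le_arith_mean s (fun _ ↦ 1) f (fun _ _ ↦ zero_le_one)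
    (by simpa using hn) hf
  simp only [Real.rpow_one, sum_const, nsmul_eq_mul, mul_one, one_mul] at hmean
  calc ∏ i ∈ s, f i = ((∏ i ∈ s, f i) ^ (#s : ℝ)⁻¹) ^ #s := by
        rw [← Real.rpow_natCast, ← Real.rpow_mul (prod_nonneg hf), inv_mul_cancel₀ hn.ne',
          Real.rpow_one]
    _ ≤ ((∑ i ∈ s, f i) / #s) ^ #s := by gcongr; exact Real.rpow_nonneg (prod_nonneg hf) _

theorem Real.pow_lt_pow_of_rpow_div_lt {B x : ℝ} (hB : 0 ≤ B) {n m : ℕ} (hm : m ≠ 0)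
    (h : B ^ ((n : ℝ) / m) < x) : B ^ n < x ^ m := by
  calc B ^ n = (B ^ ((n : ℝ) / m)) ^ m := by
        rw [← Real.rpow_mul_natCast hB, div_mul_cancel₀ _ (by exact_mod_cast hm), Real.rpow_natCast]
    _ < x ^ m := pow_lt_pow_left₀ h (Real.rpow_nonneg hB _) hm

theorem FiniteField.exists_isPrimitiveRoot {F : Type*} [Field F] [Fintype F] {k : ℕ}
    (hk : k ∣ Fintype.card F - 1) : ∃ ζ : F, IsPrimitiveRoot ζ k := by
  classical
  obtain ⟨g, hg⟩ := IsCyclic.exists_ofOrder_eq_natCard (α := Fˣ)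
  obtain ⟨m, hm⟩ := hk
  rw [Nat.card_eq_fintype_card, Fintype.card_units, hm, mul_comm] at hg
  exact ⟨_, IsPrimitiveRoot.coe_units_iff.mpr ((IsPrimitiveRoot.orderOf g).pow (orderOf_pos g) hg)⟩

theorem FiniteField.pow_orderOf_dvd_card {L : Type*} [Field L] [Fintype L] {p k : ℕ} [NeZero k]
    [CharP L p] (hp : p.Prime) {ζ : L} (hζ : IsPrimitiveRoot ζ k) :
    p ^ orderOf (p : ZMod k) ∣ Fintype.card L := by
  have := Fact.mk hp
  obtain ⟨m, -, hcard⟩ := FiniteField.card L p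
  have hk : k ∣ Fintype.card L - 1 :=
    hζ.dvd_of_pow_eq_one _ (FiniteField.pow_card_sub_one_eq_one ζ (hζ.ne_zero (NeZero.ne k)))
  have hpm : (p : ZMod k) ^ (m : ℕ) = 1 := by
    have := (ZMod.natCast_eq_zero_iff _ _).mpr hk
    rw [Nat.cast_sub Fintype.card_pos, hcard, sub_eq_zero] at this
    exact_mod_cast this
  rw [hcard]
  exact pow_dvd_pow p (Nat.le_of_dvd m.pos (orderOf_dvd_of_pow_eq_one hpm))

theorem NumberField.sq_norm_le_mean_normSq_pow {K : Type*} [Field K] [NumberField K] (α : K) :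
    (Algebra.norm ℚ α : ℝ) ^ 2 ≤
      ((∑ σ : K →ₐ[ℚ] ℂ, Complex.normSq (σ α)) / Module.finrank ℚ K) ^ Module.finrank ℚ K := by
  have hnorm : (Algebra.norm ℚ α : ℝ) ^ 2 = ∏ σ : K →ₐ[ℚ] ℂ, Complex.normSq (σ α) := by
    rw [← map_prod, ← Algebra.norm_eq_prod_embeddings ℚ ℂ α]
    simp only [eq_ratCast, Complex.normSq_ratCast, sq]
  rw [hnorm, ← AlgHom.card ℚ K ℂ, ← card_univ]
  exact Real.prod_le_arith_mean_pow _ fun σ _ ↦ Complex.normSq_nonneg _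

theorem NumberField.six_dvd_of_pow_eq_one_of_one_add_pow_eq_one {K : Type*} [Field K]
    [NumberField K] {k : ℕ} (hk : k ≠ 0) {x : K} (hx : x ^ k = 1) (hx1 : (1 + x) ^ k = 1) :
    6 ∣ k := by
  let σ : K →ₐ[ℚ] ℂ := IsAlgClosed.lift
  exact Complex.six_dvd_of_pow_eq_one_of_one_add_pow_eq_one hk (X := σ x)
    (by rw [← map_pow, hx, map_one]) (by rw [← map_one σ, ← map_add, ← map_pow, hx1, map_one])

theorem NumberField.pow_orderOf_dvd_norm_of_map_eq_zero {K F : Type*} [Field K] [NumberField K]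
    [Field F] {p k : ℕ} [NeZero k] [CharP F p] (hp : p.Prime) (φ : 𝓞 K →+* F) {ζ α : 𝓞 K}
    (hζ : IsPrimitiveRoot (φ ζ) k) (hα : φ α = 0) :
    (p ^ orderOf (p : ZMod k) : ℤ) ∣ Algebra.norm ℤ α := by
  set Q := RingHom.ker φ
  have hQ : Q ≠ ⊥ := by
    intro h
    have : (p : 𝓞 K) ∈ Q := by simp [Q, RingHom.mem_ker, CharP.cast_eq_zero]
    rw [h, Ideal.mem_bot] at this
    exact hp.ne_zero (by exact_mod_cast this)
  have := (RingHom.ker_isPrime φ).isMaximal hQ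
  let := Ideal.Quotient.field Q
  have : Finite (𝓞 K ⧸ Q) := Ideal.finiteQuotientOfFreeOfNeBot Q hQ
  have := Fintype.ofFinite (𝓞 K ⧸ Q)
  have hinj : Function.Injective (RingHom.kerLift φ) := RingHom.kerLift_injective φ
  have := (RingHom.kerLift φ).charP hinj p
  have hζQ : IsPrimitiveRoot (Ideal.Quotient.mk Q ζ) k :=
    hζ.of_map_of_injective (f := RingHom.kerLift φ) hinj
  have hcard : Ideal.absNorm Q = Fintype.card (𝓞 K ⧸ Q) := by
    rw [Ideal.absNorm_apply, Submodule.cardQuot_apply, Nat.card_eq_fintype_card]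
  refine dvd_trans ?_ (Ideal.absNorm_dvd_norm_of_mem (show α ∈ Q from hα))
  rw [hcard]
  exact_mod_cast FiniteField.pow_orderOf_dvd_card hp hζQ

namespace IsPrimitiveRoot

variable {k : ℕ} [NeZero k] {K : Type*} [Field K] [NumberField K] [IsCyclotomicExtension {k} ℚ K]
  {ζ : K}

theorem exists_ringHom_ringOfIntegers (hζ : IsPrimitiveRoot ζ k) {F : Type*} [CommRing F]
    [IsDomain F] {ζ₀ : F} (hζ₀ : IsPrimitiveRoot ζ₀ k) :
    ∃ φ : 𝓞 K →+* F, φ hζ.toInteger = ζ₀ := by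
  have hroot : aeval ζ₀ (minpoly ℤ hζ.integralPowerBasis.gen) = 0 := by
    rw [integralPowerBasis_gen, ← RingOfIntegers.minpoly_coe, show (hζ.toInteger : K) = ζ from rfl,
      ← cyclotomic_eq_minpoly hζ (NeZero.pos k), aeval_def, eval₂_eq_eval_map, map_cyclotomic]
    exact hζ₀.isRoot_cyclotomic (NeZero.pos k)
  refine ⟨hζ.integralPowerBasis.lift ζ₀ hroot, ?_⟩
  have := hζ.integralPowerBasis.lift_gen ζ₀ hroot
  rwa [integralPowerBasis_gen] at this

theorem sum_normSq_embedding_pow_sub_pow_sub_one_le (hζ : IsPrimitiveRoot ζ k) {a b : ℕ}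
    (ha : ζ ^ a ≠ 1) (hb : ζ ^ b ≠ 1) (hab : ζ ^ a ≠ ζ ^ b) :
    ∑ σ : K →ₐ[ℚ] ℂ, Complex.normSq (σ (ζ ^ b - ζ ^ a - 1)) ≤ 3 * k := by
  let σ₀ : K →ₐ[ℚ] ℂ := IsAlgClosed.lift
  have hω : IsPrimitiveRoot (σ₀ ζ) k := hζ.map_of_injective (f := σ₀) σ₀.injective
  have hroot (σ : K →ₐ[ℚ] ℂ) : ∃ j < k, σ₀ ζ ^ j = σ ζ :=
    hω.eq_pow_of_pow_eq_one (by rw [← map_pow, hζ.pow_eq_one, map_one])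
  choose J hJk hJ using hroot
  have hJinj : Function.Injective J := fun σ τ h ↦
    AlgHom.ext_of_adjoin_eq_top (IsCyclotomicExtension.adjoin_primitive_root_eq_top hζ)
      (Set.eqOn_singleton.mpr (by rw [← hJ σ, ← hJ τ, h]))
  have hσ (σ : K →ₐ[ℚ] ℂ) : σ (ζ ^ b - ζ ^ a - 1) = (σ₀ ζ ^ b) ^ J σ - (σ₀ ζ ^ a) ^ J σ - 1 := by
    rw [map_sub, map_sub, map_pow, map_pow, map_one, ← hJ, pow_right_comm, pow_right_comm _ a]
  have hpow (c : ℕ) : (σ₀ ζ ^ c) ^ k = 1 := by rw [pow_right_comm, hω.pow_eq_one, one_pow]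
  calc ∑ σ : K →ₐ[ℚ] ℂ, Complex.normSq (σ (ζ ^ b - ζ ^ a - 1))
      = ∑ j ∈ univ.image J, Complex.normSq ((σ₀ ζ ^ b) ^ j - (σ₀ ζ ^ a) ^ j - 1) := by
        rw [sum_image fun σ _ τ _ h ↦ hJinj h]
        simp only [hσ]
    _ ≤ ∑ j ∈ range k, Complex.normSq ((σ₀ ζ ^ b) ^ j - (σ₀ ζ ^ a) ^ j - 1) :=
        sum_le_sum_of_subset_of_nonneg (by simpa [subset_iff] using hJk)
          fun _ _ _ ↦ Complex.normSq_nonneg _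
    _ = 3 * k := Complex.sum_range_normSq_pow_sub_pow_sub_one (NeZero.ne k) (hpow a) (hpow b)
        (by rwa [← map_pow, map_ne_one_iff σ₀ σ₀.injective])
        (by rwa [← map_pow, map_ne_one_iff σ₀ σ₀.injective])
        (by rw [← map_pow, ← map_pow]; exact σ₀.injective.ne hab)

theorem sq_norm_pow_sub_pow_sub_one_le (hζ : IsPrimitiveRoot ζ k) {a b : ℕ} (ha : ζ ^ a ≠ 1)
    (hb : ζ ^ b ≠ 1) (hab : ζ ^ a ≠ ζ ^ b) :
    (Algebra.norm ℚ (ζ ^ b - ζ ^ a - 1) : ℝ) ^ 2 ≤ (3 * (k : ℝ) / k.totient) ^ k.totient := by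
  refine (sq_norm_le_mean_normSq_pow _).trans ?_
  rw [IsCyclotomicExtension.Rat.finrank k K]
  refine pow_le_pow_left₀ (div_nonneg (sum_nonneg fun _ _ ↦ Complex.normSq_nonneg _)
    k.totient.cast_nonneg) ?_ _
  gcongr
  exact hζ.sum_normSq_embedding_pow_sub_pow_sub_one_le ha hb hab

end IsPrimitiveRoot

theorem sq_pow_orderOf_le_of_one_add_pow_eq_pow {F : Type*} [Field F] {p k : ℕ} [NeZero k]
    [CharP F p] (hp : p.Prime) (h6 : ¬ 6 ∣ k) {ζ₀ : F} (hζ₀ : IsPrimitiveRoot ζ₀ k) {a b : ℕ}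
    (ha : ζ₀ ^ a ≠ 1) (hb : ζ₀ ^ b ≠ 1) (hab : ζ₀ ^ a ≠ ζ₀ ^ b) (hrel : 1 + ζ₀ ^ a = ζ₀ ^ b) :
    ((p : ℝ) ^ orderOf (p : ZMod k)) ^ 2 ≤ (3 * (k : ℝ) / k.totient) ^ k.totient := by
  let K := CyclotomicField k ℚ
  have : IsCyclotomicExtension {k} ℚ K := CyclotomicField.isCyclotomicExtension k ℚ
  have : NumberField K := IsCyclotomicExtension.numberField {k} ℚ K
  have hζ := IsCyclotomicExtension.zeta_spec k ℚ K
  set ζ := IsCyclotomicExtension.zeta k ℚ K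
  obtain ⟨φ, hφ⟩ := hζ.exists_ringHom_ringOfIntegers hζ₀
  have hθ : (hζ.toInteger : K) = ζ := rfl
  have hlift {c d : ℕ} (h : ζ₀ ^ c ≠ ζ₀ ^ d) : ζ ^ c ≠ ζ ^ d := fun hcd ↦ h <| by
    have : hζ.toInteger ^ c = hζ.toInteger ^ d := RingOfIntegers.coe_injective (by simpa [hθ])
    rw [← hφ, ← map_pow, ← map_pow, this]
  set α := hζ.toInteger ^ b - hζ.toInteger ^ a - 1
  have hα : (α : K) = ζ ^ b - ζ ^ a - 1 := by simp [α, hθ]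
  have hα0 : (α : K) ≠ 0 := by
    rw [hα, sub_sub, ne_eq, sub_eq_zero]
    intro h
    refine h6 (six_dvd_of_pow_eq_one_of_one_add_pow_eq_one (NeZero.ne k) (x := ζ ^ a) ?_ ?_)
    · rw [pow_right_comm, hζ.pow_eq_one, one_pow]
    · rw [add_comm, ← h, pow_right_comm, hζ.pow_eq_one, one_pow]
  have hdvd := pow_orderOf_dvd_norm_of_map_eq_zero hp φ (hφ ▸ hζ₀) (α := α)
    (by simp [α, hφ, ← hrel])
  have hnorm : (Algebra.norm ℤ α : ℚ) = Algebra.norm ℚ (α : K) := Algebra.coe_norm_int α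
  have hN0 : Algebra.norm ℤ α ≠ 0 := fun h ↦
    hα0 (Algebra.norm_eq_zero_iff.mp (by rw [← hnorm, h, Int.cast_zero]))
  have hle : (p : ℤ) ^ orderOf (p : ZMod k) ≤ |Algebra.norm ℤ α| :=
    Int.le_of_dvd (abs_pos.mpr hN0) ((dvd_abs _ _).mpr (by exact_mod_cast hdvd))
  calc ((p : ℝ) ^ orderOf (p : ZMod k)) ^ 2 ≤ ((Algebra.norm ℚ (α : K) : ℚ) : ℝ) ^ 2 := by
        rw [← hnorm, ← sq_abs ((Algebra.norm ℤ α : ℚ) : ℝ)]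
        gcongr
        exact_mod_cast hle
    _ ≤ (3 * (k : ℝ) / k.totient) ^ k.totient := by
        rw [hα]
        exact hζ.sq_norm_pow_sub_pow_sub_one_le (by simpa using hlift (d := 0) (by simpa))
          (by simpa using hlift (d := 0) (by simpa)) (hlift hab)

theorem cyclotomic_number_zero_zero_general (p n q e k : ℕ) (hp : p.Prime) (hn : 0 < n)
    (hq : q = p ^ n) (hk : 1 < k) (hek : q = e * k + 1)
    (F : Type) [Field F] [Fintype F] (hF : Fintype.card F = q)
    (hbound : (((3 * (k : ℝ)) / (Nat.totient k))
        ^ ((Nat.totient k : ℝ) / (2 * (orderOf (p : ZMod k) : ℝ))) < p))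
    (h6 : ¬ (6 ∣ k)) (h2 : ¬ ∃ w : F, w ^ e = 2) :
    ¬ ∃ x y : F, (∃ u : F, u ≠ 0 ∧ u ^ e = x) ∧ (∃ v : F, v ≠ 0 ∧ v ^ e = y) ∧
      1 + x = y := by
  rintro ⟨-, -, ⟨u, hu, rfl⟩, ⟨v, hv, rfl⟩, hrel⟩
  have : NeZero k := ⟨by omega⟩
  have := Fact.mk hp
  have : CharP F p := charP_of_card_eq_prime_pow (hF.trans hq)
  have hcard : Fintype.card F - 1 = e * k := by omega
  obtain ⟨ζ₀, hζ₀⟩ := FiniteField.exists_isPrimitiveRoot (hcard ▸ dvd_mul_left k e)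
  have hroot {w : F} (hw : w ≠ 0) : (w ^ e) ^ k = 1 := by
    rw [← pow_mul, ← hcard, FiniteField.pow_card_sub_one_eq_one w hw]
  obtain ⟨a, -, ha⟩ := hζ₀.eq_pow_of_pow_eq_one (hroot hu)
  obtain ⟨b, -, hb⟩ := hζ₀.eq_pow_of_pow_eq_one (hroot hv)
  rw [← ha, ← hb] at hrel
  have hle := sq_pow_orderOf_le_of_one_add_pow_eq_pow hp h6 hζ₀
    (fun h ↦ h2 ⟨v, by rw [← hb, ← hrel, h]; norm_num⟩)
    (fun h ↦ pow_ne_zero e hu (by rw [← ha]; linear_combination hrel.trans h))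
    (fun h ↦ one_ne_zero (by linear_combination hrel - h)) hrel
  have hd : orderOf (p : ZMod k) ≠ 0 := by
    refine (orderOf_pos_iff.mpr (isOfFinOrder_iff_pow_eq_one.mpr ⟨n, hn, ?_⟩)).ne'
    have := congrArg (Nat.cast : ℕ → ZMod k) (hq.symm.trans hek)
    push_cast at this
    simpa using this
  have := Real.pow_lt_pow_of_rpow_div_lt (B := 3 * (k : ℝ) / k.totient) (n := k.totient)
    (by positivity) (mul_ne_zero two_ne_zero hd) (by push_cast; exact hbound)
  rw [pow_mul'] at this
  linarith

theorem cyclotomic_number_zero_zero (p n q e k : ℕ) (hp : p.Prime) (hn : 0 < n)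
    (hq : q = p ^ n) (hk : 1 < k) (he : 1 < e) (hek : q = e * k + 1)
    (F : Type) [Field F] [Fintype F] (hF : Fintype.card F = q)
    (hbound : (((3 * (k : ℝ)) / (Nat.totient k))
        ^ ((Nat.totient k : ℝ) / (2 * (orderOf (p : ZMod k) : ℝ))) < p))
    (h6 : ¬ (6 ∣ k)) (h2 : ¬ ∃ w : F, w ^ e = 2) :
    ¬ ∃ x y : F, (∃ u : F, u ≠ 0 ∧ u ^ e = x) ∧ (∃ v : F, v ≠ 0 ∧ v ^ e = y) ∧
      1 + x = y :=
  cyclotomic_number_zero_zero_general p n q e k hp hn hq hk hek F hF hbound h6 h2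
end
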